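/- arXiv:2407.20169 — 7 statements merged into one kernel-verified Lean document; each statement's English description precedes it below -/
import Mathlib

section
/- Let [x_1-τ_1, x_1+τ_1], …, [x_n-τ_n, x_n+τ_n] be finitely many closed intervals in ℝ with all τ_i > 0 such that their union is a single closed interval. Let x = (∑_{i=1}^n τ_i x_i)/(∑_{i=1}^n τ_i). Then the union of the intervals is contained in the interval [x - ∑_{i=1}^n τ_i, x + ∑_{i=1}^n τ_i]. -/
open Set

private lemma gg_merge (x1 τ1 x2 τ2 : ℝ) (h1 : 0 < τ1) (h2 : 0 < τ2)
    (h : ((Icc (x1 - τ1) (x1 + τ1)) ∩ (Icc (x2 - τ2) (x2 + τ2))).Nonempty) :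
    Icc (x1 - τ1) (x1 + τ1) ∪ Icc (x2 - τ2) (x2 + τ2) ⊆
      Icc ((τ1 * x1 + τ2 * x2) / (τ1 + τ2) - (τ1 + τ2))
          ((τ1 * x1 + τ2 * x2) / (τ1 + τ2) + (τ1 + τ2)) := by
  obtain ⟨y, ⟨ha, hb⟩, ⟨hc, hd⟩⟩ := h
  have ht : 0 < τ1 + τ2 := by linarith
  have hd1 : x1 - x2 ≤ τ1 + τ2 := by linarith
  have hd2 : x2 - x1 ≤ τ1 + τ2 := by linarith
  rintro z (⟨hz1, hz2⟩ | ⟨hz1, hz2⟩) <;>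
    refine ⟨?_, ?_⟩ <;>
    first
      | (rw [sub_le_iff_le_add, div_le_iff₀ ht]; nlinarith)
      | (rw [← sub_le_iff_le_add, le_div_iff₀ ht]; nlinarith)

private lemma gg_aux {ι : Type*} [DecidableEq ι] :
    ∀ (N : ℕ) (s : Finset ι), s.card = N → s.Nonempty →
    ∀ (x τ : ι → ℝ), (∀ i ∈ s, 0 < τ i) →
    IsConnected (⋃ i ∈ s, Icc (x i - τ i) (x i + τ i)) →
    (⋃ i ∈ s, Icc (x i - τ i) (x i + τ i)) ⊆
      Icc ((∑ i ∈ s, τ i * x i) / (∑ i ∈ s, τ i) - ∑ i ∈ s, τ i)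
          ((∑ i ∈ s, τ i * x i) / (∑ i ∈ s, τ i) + ∑ i ∈ s, τ i) := by
  intro N
  induction N with
  | zero =>
    intro s hcard hne
    rw [Finset.card_eq_zero] at hcard
    simp [hcard] at hne
  | succ N ih =>
    intro s hcard hne x τ hτ hconn
    rcases Nat.eq_zero_or_pos N with hN | hN
    · -- card s = 1
      subst hN
      rw [Finset.card_eq_one] at hcard
      obtain ⟨i, rfl⟩ := hcard
      have hτi := hτ i (Finset.mem_singleton_self i)
      simp only [Finset.sum_singleton, Set.biUnion_singleton]
      rw [mul_div_cancel_left₀ _ hτi.ne']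
      intro z hz
      simpa using hz
    · -- card s ≥ 2
      obtain ⟨i, hi⟩ := hne
      have hcard2 : 1 < s.card := by omega
      -- the union of the other intervals
      set U : Set ℝ := ⋃ k ∈ s.erase i, Icc (x k - τ k) (x k + τ k) with hU
      have hne' : (s.erase i).Nonempty := by
        rw [← Finset.card_pos, Finset.card_erase_of_mem hi]; omega
      obtain ⟨j0, hj0⟩ := hne'
      -- the interval of i meets U, by connectedness
      have hmeet : ((Icc (x i - τ i) (x i + τ i)) ∩ U).Nonempty := by
        have hcl1 : IsClosed (Icc (x i - τ i) (x i + τ i)) := isClosed_Icc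
        have hcl2 : IsClosed U := by
          apply Set.Finite.isClosed_biUnion (Finset.finite_toSet _)
          intro k _; exact isClosed_Icc
        have hsub : (⋃ k ∈ s, Icc (x k - τ k) (x k + τ k)) ⊆
            Icc (x i - τ i) (x i + τ i) ∪ U := by
          intro z hz
          simp only [Set.mem_iUnion, exists_prop] at hz
          obtain ⟨k, hk, hzk⟩ := hz
          rcases eq_or_ne k i with rfl | hki
          · exact Or.inl hzk
          · exact Or.inr (Set.mem_biUnion (Finset.mem_erase.2 ⟨hki, hk⟩) hzk)
        have h1 : ((⋃ k ∈ s, Icc (x k - τ k) (x k + τ k)) ∩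
            Icc (x i - τ i) (x i + τ i)).Nonempty := by
          refine ⟨x i, Set.mem_biUnion hi ?_, ?_⟩ <;>
            · have := hτ i hi; constructor <;> linarith
        have h2 : ((⋃ k ∈ s, Icc (x k - τ k) (x k + τ k)) ∩ U).Nonempty := by
          refine ⟨x j0, ?_, ?_⟩
          · exact Set.mem_biUnion (Finset.mem_of_mem_erase hj0)
              (by have := hτ j0 (Finset.mem_of_mem_erase hj0); constructor <;> linarith)
          · exact Set.mem_biUnion hj0
              (by have := hτ j0 (Finset.mem_of_mem_erase hj0); constructor <;> linarith)
        have := (isPreconnected_closed_iff.1 hconn.isPreconnected) _ _ hcl1 hcl2 hsub h1 h2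
        obtain ⟨z, _, hz⟩ := this
        exact ⟨z, hz⟩
      obtain ⟨z, hzi, hzU⟩ := hmeet
      simp only [hU, Set.mem_iUnion, exists_prop] at hzU
      obtain ⟨j, hjmem, hzj⟩ := hzU
      have hji : j ≠ i := (Finset.mem_erase.1 hjmem).1
      have hjs : j ∈ s := Finset.mem_of_mem_erase hjmem
      have hτi := hτ i hi
      have hτj := hτ j hjs
      have htij : (0:ℝ) < τ i + τ j := by linarith
      -- merge j into i
      set x' : ι → ℝ := Function.update x i ((τ i * x i + τ j * x j) / (τ i + τ j)) with hx'
      set τ' : ι → ℝ := Function.update τ i (τ i + τ j) with hτ'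
      set s' : Finset ι := s.erase j with hs'
      have his' : i ∈ s' := Finset.mem_erase.2 ⟨fun h => hji h.symm, hi⟩
      have hcard' : s'.card = N := by rw [hs', Finset.card_erase_of_mem hjs, hcard]; omega
      have hne'' : s'.Nonempty := ⟨i, his'⟩
      have hpos' : ∀ k ∈ s', 0 < τ' k := by
        intro k hk
        rcases eq_or_ne k i with rfl | hki
        · rw [hτ', Function.update_self]; linarith
        · rw [hτ', Function.update_of_ne hki]
          exact hτ k (Finset.mem_of_mem_erase hk)
      -- sums are preserved
      have hsum1 : ∑ k ∈ s', τ' k = ∑ k ∈ s, τ k := by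
        rw [← Finset.add_sum_erase _ _ his', ← Finset.add_sum_erase _ _ hjs,
          ← Finset.add_sum_erase _ _ (Finset.mem_erase.2 ⟨fun h => hji h.symm, hi⟩ :
            i ∈ s.erase j)]
        rw [hτ', Function.update_self]
        have : ∑ k ∈ (s.erase j).erase i, Function.update τ i (τ i + τ j) k
            = ∑ k ∈ (s.erase j).erase i, τ k := by
          apply Finset.sum_congr rfl
          intro k hk
          exact Function.update_of_ne (Finset.mem_erase.1 hk).1 _ _
        rw [hs', this]; ring
      have hsum2 : ∑ k ∈ s', τ' k * x' k = ∑ k ∈ s, τ k * x k := by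
        rw [← Finset.add_sum_erase _ _ his', ← Finset.add_sum_erase _ _ hjs,
          ← Finset.add_sum_erase _ _ (Finset.mem_erase.2 ⟨fun h => hji h.symm, hi⟩ :
            i ∈ s.erase j)]
        rw [hτ', hx', Function.update_self, Function.update_self,
          mul_div_cancel₀ _ htij.ne']
        have : ∑ k ∈ (s.erase j).erase i,
            Function.update τ i (τ i + τ j) k * Function.update x i
              ((τ i * x i + τ j * x j) / (τ i + τ j)) k
            = ∑ k ∈ (s.erase j).erase i, τ k * x k := by
          apply Finset.sum_congr rfl
          intro k hk
          rw [Function.update_of_ne (Finset.mem_erase.1 hk).1,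
            Function.update_of_ne (Finset.mem_erase.1 hk).1]
        rw [hs', this]; ring
      -- the merged interval contains both old intervals
      have hmerge : Icc (x i - τ i) (x i + τ i) ∪ Icc (x j - τ j) (x j + τ j) ⊆
          Icc (x' i - τ' i) (x' i + τ' i) := by
        rw [hx', hτ', Function.update_self, Function.update_self]
        exact gg_merge (x i) (τ i) (x j) (τ j) hτi hτj ⟨z, hzi, hzj⟩
      -- old union ⊆ new union
      have hsub2 : (⋃ k ∈ s, Icc (x k - τ k) (x k + τ k)) ⊆
          ⋃ k ∈ s', Icc (x' k - τ' k) (x' k + τ' k) := by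
        intro w hw
        simp only [Set.mem_iUnion, exists_prop] at hw ⊢
        obtain ⟨k, hk, hwk⟩ := hw
        rcases eq_or_ne k j with hkj | hkj
        · rw [hkj] at hwk
          exact ⟨i, his', hmerge (Or.inr hwk)⟩
        rcases eq_or_ne k i with hki | hki
        · rw [hki] at hwk
          exact ⟨i, his', hmerge (Or.inl hwk)⟩
        · refine ⟨k, Finset.mem_erase.2 ⟨hkj, hk⟩, ?_⟩
          rw [hx', hτ', Function.update_of_ne hki, Function.update_of_ne hki]
          exact hwk
      -- new union is old union ∪ merged interval
      have hunion_eq : (⋃ k ∈ s', Icc (x' k - τ' k) (x' k + τ' k)) =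
          (⋃ k ∈ s, Icc (x k - τ k) (x k + τ k)) ∪ Icc (x' i - τ' i) (x' i + τ' i) := by
        apply Set.Subset.antisymm
        · intro w hw
          simp only [Set.mem_iUnion, exists_prop] at hw
          obtain ⟨k, hk, hwk⟩ := hw
          rcases eq_or_ne k i with hki | hki
          · rw [hki] at hwk
            exact Or.inr hwk
          · left
            refine Set.mem_biUnion (Finset.mem_of_mem_erase hk) ?_
            rwa [hx', hτ', Function.update_of_ne hki, Function.update_of_ne hki] at hwk
        · rintro w (hw | hw)
          · exact hsub2 hw
          · exact Set.mem_biUnion his' hw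
      -- new union is connected
      have hconn' : IsConnected (⋃ k ∈ s', Icc (x' k - τ' k) (x' k + τ' k)) := by
        rw [hunion_eq]
        refine IsConnected.union ⟨x i, Set.mem_biUnion hi (by constructor <;> linarith),
            hmerge (Or.inl (by constructor <;> linarith))⟩ hconn ?_
        apply isConnected_Icc
        have : 0 < τ' i := hpos' i his'
        linarith
      have := ih s' hcard' hne'' x' τ' hpos' hconn'
      rw [hsum1, hsum2] at this
      exact hsub2.trans (hunion_eq ▸ this)

/-- **Goodman–Goodman lemma.** If finitely many closed intervals
`[xᵢ - τᵢ, xᵢ + τᵢ]` (with `τᵢ > 0`) have a union which is a single closed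
interval (i.e. is connected), then the union is covered by the interval of
half-length `∑ τᵢ` centered at the weighted average
`x = (∑ τᵢ xᵢ) / (∑ τᵢ)`. -/
theorem stmt_0 (n : ℕ) (hn : 0 < n) (x τ : Fin n → ℝ) (hτ : ∀ i, 0 < τ i)
    (hconn : IsConnected (⋃ i, Icc (x i - τ i) (x i + τ i))) :
    (⋃ i, Icc (x i - τ i) (x i + τ i)) ⊆
      Icc ((∑ i, τ i * x i) / (∑ i, τ i) - ∑ i, τ i)
          ((∑ i, τ i * x i) / (∑ i, τ i) + ∑ i, τ i) := by
  have : Nonempty (Fin n) := ⟨⟨0, hn⟩⟩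
  have h := gg_aux (ι := Fin n) n Finset.univ (by simp) Finset.univ_nonempty
    x τ (fun i _ => hτ i) (by simpa using hconn)
  simpa using h
end

section
/- Let B[x_1,τ_1], …, B[x_n,τ_n] be closed disks in the Euclidean plane ℝ² (with all τ_i > 0) such that no line of ℝ² divides them into two non-empty families without touching or intersecting at least one disk. Then ⋃_{i=1}^n B[x_i,τ_i] is contained in the closed disk of radius ∑_{i=1}^n τ_i centered at (∑_{i=1}^n τ_i x_i)/(∑_{i=1}^n τ_i); in particular, the disks can be covered by a single disk of radius ∑_{i=1}^n τ_i. -/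
open Set Metric MeasureTheory
open scoped RealInnerProductSpace

/-!
Project everything onto a unit direction `u`. The disks become the intervals
`[aᵢ - τᵢ, aᵢ + τᵢ]` with `aᵢ = ⟪u, xᵢ⟫`, and since no line orthogonal to `u` separates the
disks, these intervals leave no gap. Writing `bᵢ = aᵢ + τᵢ`, the stretch `(bⱼ, bᵢ]` is then
covered by the intervals ending beyond `bⱼ`, so `bᵢ - bⱼ ≤ ∑_{bⱼ < bₖ} 2τₖ`. Since
`bᵢ - aⱼ = (bᵢ - bⱼ) + τⱼ`, weighting by `τⱼ` and summing over `j` counts every unordered pair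
`{j, k}` at most once besides the diagonal terms `τⱼ²`, which gives
`T bᵢ ≤ ∑ τⱼ aⱼ + T²` with `T = ∑ τⱼ`, i.e. `⟪u, y - c⟫ ≤ T` for every point `y` of the disks,
where `c = T⁻¹ ∑ τⱼ xⱼ`.
-/

lemma sub_le_sum_of_Ioc_subset_biUnion_Icc {ι : Type*} {s : Finset ι} {l r : ι → ℝ} {p q : ℝ}
    (hlr : ∀ k ∈ s, l k ≤ r k) (h : Ioc p q ⊆ ⋃ k ∈ s, Icc (l k) (r k)) :
    q - p ≤ ∑ k ∈ s, (r k - l k) := by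
  have hvol : volume (Ioc p q) ≤ ∑ k ∈ s, volume (Icc (l k) (r k)) :=
    (measure_mono h).trans (measure_biUnion_finset_le s _)
  have hnonneg : ∀ k ∈ s, 0 ≤ r k - l k := fun k hk => sub_nonneg.2 (hlr k hk)
  simp only [Real.volume_Ioc, Real.volume_Icc] at hvol
  rw [← ENNReal.ofReal_sum_of_nonneg hnonneg] at hvol
  exact (ENNReal.ofReal_le_ofReal_iff (Finset.sum_nonneg hnonneg)).1 hvol

section Intervals

variable {ι : Type*}

def NoGap (a τ : ι → ℝ) : Prop :=
  ∀ β, (∃ j, a j + τ j < β) → (∃ j, β < a j - τ j) → ∃ k, β ∈ Icc (a k - τ k) (a k + τ k)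

variable [Fintype ι] {a τ : ι → ℝ}

lemma sum_mul_sum_filter_lt_add_sum_sq_le (b : ι → ℝ) (hτ : ∀ k, 0 ≤ τ k) :
    ∑ j, τ j * ∑ k with b j < b k, 2 * τ k + ∑ j, τ j ^ 2 ≤ (∑ j, τ j) ^ 2 := by
  classical
  set f : ι → ι → ℝ := fun j k => if b j < b k then τ j * τ k else 0
  have hpairs : ∑ j, τ j * ∑ k with b j < b k, 2 * τ k =
      ∑ j, ∑ k, f j k + ∑ j, ∑ k, f k j := by
    rw [Finset.sum_comm (f := fun j k => f k j), ← Finset.sum_add_distrib]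
    refine Finset.sum_congr rfl fun j _ => ?_
    rw [Finset.mul_sum, Finset.sum_filter, ← Finset.sum_add_distrib]
    refine Finset.sum_congr rfl fun k _ => ?_
    simp only [f]
    split_ifs <;> ring
  have hdiag : ∑ j, τ j ^ 2 = ∑ j, ∑ k, if j = k then τ j * τ k else 0 := by
    simp [sq]
  rw [hpairs, hdiag, sq, Finset.sum_mul_sum]
  simp only [← Finset.sum_add_distrib]
  refine Finset.sum_le_sum fun j _ => Finset.sum_le_sum fun k _ => ?_
  have := mul_nonneg (hτ j) (hτ k)
  simp only [f]
  split_ifs <;> subst_vars <;> linarith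

lemma sub_le_sum_of_no_gap (hτ : ∀ k, 0 ≤ τ k)
    (hgap : NoGap a τ)
    (i j : ι) :
    a i + τ i - (a j + τ j) ≤ ∑ k with a j + τ j < a k + τ k, 2 * τ k := by
  have hcover : Ioc (a j + τ j) (a i + τ i) ⊆
      ⋃ k ∈ Finset.univ.filter fun k => a j + τ j < a k + τ k, Icc (a k - τ k) (a k + τ k) := by
    rintro β ⟨hjβ, hβi⟩
    obtain ⟨k, hk⟩ : ∃ k, β ∈ Icc (a k - τ k) (a k + τ k) := by
      by_cases hβ : a i - τ i ≤ β
      · exact ⟨i, hβ, hβi⟩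
      · exact hgap β ⟨j, hjβ⟩ ⟨i, not_le.1 hβ⟩
    exact mem_biUnion (Finset.mem_filter.2 ⟨Finset.mem_univ k, hjβ.trans_le hk.2⟩) hk
  calc a i + τ i - (a j + τ j)
      ≤ ∑ k with a j + τ j < a k + τ k, (a k + τ k - (a k - τ k)) :=
        sub_le_sum_of_Ioc_subset_biUnion_Icc (fun k _ => by linarith [hτ k]) hcover
    _ = ∑ k with a j + τ j < a k + τ k, 2 * τ k :=
        Finset.sum_congr rfl fun k _ => by ring

theorem sum_mul_add_le_of_no_gap (hτ : ∀ k, 0 ≤ τ k)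
    (hgap : NoGap a τ)
    (i : ι) :
    (∑ j, τ j) * (a i + τ i) ≤ ∑ j, τ j * a j + (∑ j, τ j) ^ 2 := by
  have hgaps : ∑ j, τ j * (a i + τ i - (a j + τ j)) ≤
      ∑ j, τ j * ∑ k with a j + τ j < a k + τ k, 2 * τ k :=
    Finset.sum_le_sum fun j _ => mul_le_mul_of_nonneg_left (sub_le_sum_of_no_gap hτ hgap i j) (hτ j)
  have hpairs := sum_mul_sum_filter_lt_add_sum_sq_le (fun k => a k + τ k) hτ
  have hsplit : (∑ j, τ j) * (a i + τ i) - ∑ j, τ j * a j =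
      ∑ j, τ j * (a i + τ i - (a j + τ j)) + ∑ j, τ j ^ 2 := by
    rw [Finset.sum_mul, ← Finset.sum_sub_distrib, ← Finset.sum_add_distrib]
    exact Finset.sum_congr rfl fun j _ => by ring
  linarith

end Intervals

section Disks

variable {E : Type*} [NormedAddCommGroup E] [InnerProductSpace ℝ E]

lemma abs_inner_sub_le_of_mem_closedBall {u z c : E} {r : ℝ} (hu : ‖u‖ = 1)
    (hz : z ∈ closedBall c r) : |⟪u, z⟫ - ⟪u, c⟫| ≤ r := by
  rw [← inner_sub_right]
  calc |⟪u, z - c⟫| ≤ ‖u‖ * ‖z - c‖ := abs_real_inner_le_norm _ _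
    _ ≤ r := by rw [hu, one_mul, ← dist_eq_norm]; exact hz

lemma norm_le_of_forall_norm_eq_one_inner_le {v : E} {r : ℝ} (hr : 0 ≤ r)
    (h : ∀ u : E, ‖u‖ = 1 → ⟪u, v⟫ ≤ r) : ‖v‖ ≤ r := by
  rcases eq_or_ne v 0 with rfl | hv
  · simpa using hr
  have hv' : ‖v‖ ≠ 0 := norm_ne_zero_iff.2 hv
  have hunit : ‖‖v‖⁻¹ • v‖ = 1 := by
    rw [norm_smul, norm_inv, norm_norm, inv_mul_cancel₀ hv']
  calc ‖v‖ = ⟪‖v‖⁻¹ • v, v⟫ := by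
        rw [real_inner_smul_left, real_inner_self_eq_norm_sq]; field_simp
    _ ≤ r := h _ hunit

variable {ι : Type*}

def NotSeparated (x : ι → E) (τ : ι → ℝ) : Prop :=
  ¬ ∃ (u : E) (α : ℝ), u ≠ 0 ∧
    (∀ i, ∀ y ∈ closedBall (x i) (τ i), ⟪u, y⟫ ≠ α) ∧
    (∃ i, ∀ y ∈ closedBall (x i) (τ i), ⟪u, y⟫ < α) ∧
    (∃ j, ∀ y ∈ closedBall (x j) (τ j), α < ⟪u, y⟫)

variable [Fintype ι] {x : ι → E} {τ : ι → ℝ}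

lemma noGap_inner_of_notSeparated (hns : NotSeparated x τ) {u : E} (hu : ‖u‖ = 1) :
    NoGap (fun k => ⟪u, x k⟫) τ := by
  intro β hleft hright
  by_contra hgap
  refine hns ⟨u, β, norm_ne_zero_iff.1 (by simp [hu]), fun k y hy hyβ => hgap ⟨k, ?_⟩, ?_, ?_⟩
  · have := abs_le.1 (abs_inner_sub_le_of_mem_closedBall hu hy)
    constructor <;> linarith
  · obtain ⟨j, hj⟩ := hleft
    exact ⟨j, fun y hy => by
      linarith [(abs_le.1 (abs_inner_sub_le_of_mem_closedBall hu hy)).2]⟩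
  · obtain ⟨j, hj⟩ := hright
    exact ⟨j, fun y hy => by
      linarith [(abs_le.1 (abs_inner_sub_le_of_mem_closedBall hu hy)).1]⟩

theorem iUnion_closedBall_subset_closedBall_of_notSeparated (hτ : ∀ i, 0 < τ i)
    (hns : NotSeparated x τ) :
    (⋃ i, closedBall (x i) (τ i)) ⊆
      closedBall ((∑ i, τ i)⁻¹ • ∑ i, τ i • x i) (∑ i, τ i) := by
  intro y hy
  obtain ⟨i, hyi⟩ := mem_iUnion.1 hy
  have hT : 0 < ∑ j, τ j := Finset.sum_pos (fun j _ => hτ j) ⟨i, Finset.mem_univ i⟩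
  rw [mem_closedBall, dist_eq_norm]
  refine norm_le_of_forall_norm_eq_one_inner_le hT.le fun u hu => ?_
  have hproj := sum_mul_add_le_of_no_gap (fun k => (hτ k).le)
    (noGap_inner_of_notSeparated hns hu) i
  have hy := (abs_le.1 (abs_inner_sub_le_of_mem_closedBall hu hyi)).2
  have hcenter : ⟪u, (∑ j, τ j)⁻¹ • ∑ j, τ j • x j⟫ = (∑ j, τ j)⁻¹ * ∑ j, τ j * ⟪u, x j⟫ := by
    simp only [real_inner_smul_right, inner_sum]
  have hright : ⟪u, x i⟫ + τ i ≤ (∑ j, τ j)⁻¹ * ∑ j, τ j * ⟪u, x j⟫ + ∑ j, τ j := by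
    rw [← mul_le_mul_iff_right₀ hT, mul_add _ (_ * _), mul_inv_cancel_left₀ hT.ne']
    linarith
  rw [inner_sub_right, hcenter]
  linarith

end Disks

theorem stmt_1_general (n : ℕ)
    (x : Fin n → EuclideanSpace ℝ (Fin 2)) (τ : Fin n → ℝ) (hτ : ∀ i, 0 < τ i)
    (hns : ¬ (∃ (u : EuclideanSpace ℝ (Fin 2)) (α : ℝ), u ≠ 0 ∧
      (∀ i, ∀ y ∈ closedBall (x i) (τ i), ⟪u, y⟫ ≠ α) ∧
      (∃ i, ∀ y ∈ closedBall (x i) (τ i), ⟪u, y⟫ < α) ∧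
      (∃ j, ∀ y ∈ closedBall (x j) (τ j), α < ⟪u, y⟫))) :
    (⋃ i, closedBall (x i) (τ i)) ⊆
      closedBall ((∑ i, τ i)⁻¹ • ∑ i, τ i • x i) (∑ i, τ i) :=
  iUnion_closedBall_subset_closedBall_of_notSeparated hτ hns

/-- **Theorem of Goodman and Goodman (Erdős' problem).**
If no line of `ℝ²` divides the disks `B[xᵢ, τᵢ]` into two non-empty families
without touching or intersecting at least one disk, then the disks are covered
by the disk of radius `∑ τᵢ` centered at `(∑ τᵢ xᵢ) / (∑ τᵢ)`.
A line is `{y | ⟪u, y⟫ = α}` with `u ≠ 0`; it divides the family badly if it is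
disjoint from every disk while each open half-plane contains at least one disk. -/
theorem stmt_1 (n : ℕ) (hn : 0 < n)
    (x : Fin n → EuclideanSpace ℝ (Fin 2)) (τ : Fin n → ℝ) (hτ : ∀ i, 0 < τ i)
    (hns : ¬ (∃ (u : EuclideanSpace ℝ (Fin 2)) (α : ℝ), u ≠ 0 ∧
      (∀ i, ∀ y ∈ closedBall (x i) (τ i), ⟪u, y⟫ ≠ α) ∧
      (∃ i, ∀ y ∈ closedBall (x i) (τ i), ⟪u, y⟫ < α) ∧
      (∃ j, ∀ y ∈ closedBall (x j) (τ j), α < ⟪u, y⟫))) :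
    (⋃ i, closedBall (x i) (τ i)) ⊆
      closedBall ((∑ i, τ i)⁻¹ • ∑ i, τ i • x i) (∑ i, τ i) :=
  stmt_1_general n x τ hτ hns
end

section
/- Let T be a d-dimensional simplex in ℝ^d and let 𝒯 = {x_i + τ_i T : i = 1, …, n} (with all τ_i > 0) be a family of positive homothetic copies of T such that every hyperplane that is parallel to a facet of T and intersects conv(⋃𝒯) intersects some member of 𝒯. Then ⋃𝒯 can be covered by a translate of ((d+1)/2)(∑_{i=1}^n τ_i) T. -/
open Set Metric Pointwise
open scoped RealInnerProductSpace

/-!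
In barycentric coordinates with respect to `T`, the homothet `xᵢ + τᵢ T` is the set of points
whose `j`-th coordinate is at least some `Bᵢⱼ` for every `j`, with `∑ⱼ Bᵢⱼ = 1 - τᵢ`, and its
`j`-th coordinates fill the interval `[Bᵢⱼ, Bᵢⱼ + τᵢ]`. The hyperplane condition says that in
each direction `j` these intervals cover `[mⱼ, Bᵢⱼ]`, where `mⱼ = minᵢ Bᵢⱼ`. A one-dimensional
measure estimate for such packed intervals gives
`∑ᵢ τᵢ Bᵢⱼ ≤ λ mⱼ + (λ² - ∑ᵢ τᵢ²) / 2` with `λ = ∑ᵢ τᵢ`; summing over the `d + 1` directions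
yields `∑ⱼ mⱼ ≥ 1 - (d + 1) λ / 2`, so the simplex `{z | ∀ j, mⱼ ≤ zⱼ}` containing all homothets
fits in a translate of `((d + 1) / 2) λ T`.
-/

open Finset in
theorem two_mul_sum_sum_filter_lt_le {κ R α : Type*} [Fintype κ] [CommRing R] [LinearOrder R]
    [IsStrictOrderedRing R] [LinearOrder α] (a : κ → R) (β : κ → α) (ha : ∀ i, 0 ≤ a i) :
    2 * ∑ i, ∑ k ∈ univ.filter (fun k => β k < β i), a i * a k ≤
      (∑ i, a i) ^ 2 - ∑ i, a i ^ 2 := by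
  classical
  have hpair : ∀ i k, ((if β k < β i then a i * a k else 0) + (if β i < β k then a i * a k else 0)
      + if i = k then a i * a k else 0) ≤ a i * a k := by
    intro i k
    have := mul_nonneg (ha i) (ha k)
    rcases eq_or_ne i k with rfl | hik
    · simp
    · rcases lt_trichotomy (β k) (β i) with h | h | h <;> simp [h, hik, not_lt_of_gt, this]
  have hswap : ∑ i, ∑ k, (if β i < β k then a i * a k else 0) =
      ∑ i, ∑ k, (if β k < β i then a i * a k else 0) := by
    rw [sum_comm]
    simp_rw [mul_comm]
  have hdiag : ∑ i, ∑ k, (if i = k then a i * a k else 0) = ∑ i, a i ^ 2 := by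
    simp [sq]
  have := sum_le_sum fun i (_ : i ∈ Finset.univ) =>
    sum_le_sum fun k (_ : k ∈ Finset.univ) => hpair i k
  simp only [sum_add_distrib] at this
  rw [hswap, hdiag] at this
  rw [sq (∑ i, a i), sum_mul_sum]
  simp only [sum_filter]
  linarith

section IntervalPacking

variable {κ : Type*} [Fintype κ] (τ β : κ → ℝ) {m : ℝ}

theorem sub_le_sum_of_Ico_subset_iUnion_Icc (hτ : ∀ i, 0 ≤ τ i) {i : κ}
    (hcov : Ico m (β i) ⊆ ⋃ k, Icc (β k) (β k + τ k)) :
    β i - m ≤ ∑ k ∈ Finset.univ.filter (fun k => β k < β i), τ k := by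
  have hsub : Ico m (β i) ⊆
      ⋃ k ∈ Finset.univ.filter (fun k => β k < β i), Icc (β k) (β k + τ k) := by
    intro r hr
    obtain ⟨k, hk⟩ := mem_iUnion.mp (hcov hr)
    exact mem_biUnion (by simpa using hk.1.trans_lt hr.2) hk
  have := (MeasureTheory.measure_mono (μ := MeasureTheory.volume) hsub).trans
    (MeasureTheory.measure_biUnion_finset_le _ _)
  simp only [Real.volume_Ico, Real.volume_Icc, add_sub_cancel_left] at this
  rwa [← ENNReal.ofReal_sum_of_nonneg (fun k _ => hτ k),
    ENNReal.ofReal_le_ofReal_iff (Finset.sum_nonneg fun k _ => hτ k)] at this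

theorem sum_mul_le_of_Ico_subset_iUnion_Icc (hτ : ∀ i, 0 ≤ τ i)
    (hcov : ∀ i, Ico m (β i) ⊆ ⋃ k, Icc (β k) (β k + τ k)) :
    ∑ i, τ i * β i ≤ (∑ i, τ i) * m + ((∑ i, τ i) ^ 2 - ∑ i, τ i ^ 2) / 2 := by
  have hlen : ∑ i, τ i * (β i - m) ≤
      ∑ i, ∑ k ∈ Finset.univ.filter (fun k => β k < β i), τ i * τ k := by
    refine Finset.sum_le_sum fun i _ => ?_
    rw [← Finset.mul_sum]
    exact mul_le_mul_of_nonneg_left (sub_le_sum_of_Ico_subset_iUnion_Icc τ β hτ (hcov i)) (hτ i)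
  have hpairs := two_mul_sum_sum_filter_lt_le τ β hτ
  simp only [mul_sub, Finset.sum_sub_distrib, ← Finset.sum_mul] at hlen
  linarith

end IntervalPacking

namespace AffineBasis

variable {ι k E : Type*} [AddCommGroup E]

section Ring
variable [Ring k] [Module k E] (b : AffineBasis ι k E)

theorem coord_add_smul (j : ι) (p q : E) (c : k) :
    b.coord j (p + c • q) = b.coord j p + c * (b.coord j q - b.coord j 0) := by
  have hlin : (b.coord j).linear q = b.coord j q - b.coord j 0 := by
    have h := (b.coord j).map_vadd 0 q
    simp only [vadd_eq_add, add_zero] at h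
    rw [h, add_sub_cancel_right]
  rw [add_comm, ← vadd_eq_add, (b.coord j).map_vadd, map_smul, smul_eq_mul, hlin, vadd_eq_add,
    add_comm]

theorem coord_eq_zero_of_mem_affineSpan {j : ι} {w : E}
    (hw : w ∈ affineSpan k (b '' {i | i ≠ j})) : b.coord j w = 0 := by
  have hle : affineSpan k (b '' {i | i ≠ j}) ≤ (affineSpan k {(0 : k)}).comap (b.coord j) := by
    rw [affineSpan_le]
    rintro _ ⟨i, hi, rfl⟩
    simp [b.coord_apply_ne (Ne.symm hi)]
  simpa using hle hw

theorem coord_add_of_mem_affineSpan {j : ι} {w : E} (hw : w ∈ affineSpan k (b '' {i | i ≠ j}))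
    (c : E) : b.coord j (c + w) = b.coord j c - b.coord j 0 := by
  simpa [add_comm, b.coord_eq_zero_of_mem_affineSpan hw] using b.coord_add_smul j w c 1

/-- The `j`-th barycentric coordinate of the facet of `x +ᵥ s • convexHull k (range b)` opposite
to its vertex `x + s • b j`. -/
noncomputable def facetCoord (j : ι) (x : E) (s : k) : k := b.coord j x - s * b.coord j 0

theorem sum_facetCoord [Fintype ι] (x : E) (s : k) : ∑ j, b.facetCoord j x s = 1 - s := by
  simp only [facetCoord, Finset.sum_sub_distrib, ← Finset.mul_sum, b.sum_coord_apply_eq_one,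
    mul_one]

end Ring

variable [Field k] [LinearOrder k] [IsStrictOrderedRing k] [Module k E] (b : AffineBasis ι k E)

def FacetTranslatesMeet {κ : Type*} (j : ι) (S : κ → Set E) : Prop :=
  ∀ c : E, (((fun y => c + y) '' (affineSpan k (b '' {i | i ≠ j}) : Set E)) ∩
      convexHull k (⋃ i, S i)).Nonempty →
    ∃ i, (((fun y => c + y) '' (affineSpan k (b '' {i | i ≠ j}) : Set E)) ∩ S i).Nonempty

theorem coord_le_one_of_mem_convexHull [Fintype ι] {z : E} (hz : z ∈ convexHull k (range b))
    (j : ι) : b.coord j z ≤ 1 := by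
  rw [b.convexHull_eq_nonneg_coord] at hz
  rw [← b.sum_coord_apply_eq_one z]
  exact Finset.single_le_sum (fun i _ => hz i) (Finset.mem_univ j)

theorem coord_mem_Icc_of_mem_vadd_smul_convexHull [Fintype ι] {t z : E} {s : k} (hs : 0 ≤ s)
    (hz : z ∈ t +ᵥ s • convexHull k (range b)) (j : ι) :
    b.coord j z ∈ Icc (b.facetCoord j t s) (b.facetCoord j t s + s) := by
  obtain ⟨_, ⟨u, hu, rfl⟩, rfl⟩ := hz
  have h0 : 0 ≤ b.coord j u := by rw [b.convexHull_eq_nonneg_coord] at hu; exact hu j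
  have h1 := b.coord_le_one_of_mem_convexHull hu j
  change b.coord j (t + s • u) ∈ _
  rw [b.coord_add_smul, facetCoord]
  constructor <;> nlinarith

theorem mem_vadd_smul_convexHull_iff {t z : E} {s : k} (hs : 0 < s) :
    z ∈ t +ᵥ s • convexHull k (range b) ↔ ∀ j, b.facetCoord j t s ≤ b.coord j z := by
  have hz : z = t + s • (s⁻¹ • (z - t)) := by rw [smul_inv_smul₀ hs.ne']; abel
  rw [mem_vadd_set, b.convexHull_eq_nonneg_coord]
  constructor
  · rintro ⟨_, ⟨u, hu, rfl⟩, rfl⟩ j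
    rw [vadd_eq_add, b.coord_add_smul, facetCoord]
    nlinarith [hu j]
  · intro h
    refine ⟨s • (s⁻¹ • (z - t)), smul_mem_smul_set fun j => ?_, hz.symm⟩
    have := h j
    rw [hz, b.coord_add_smul, facetCoord] at this
    nlinarith

theorem exists_setOf_le_coord_subset_vadd_smul_convexHull [Fintype ι] {s : k} (hs : 0 < s)
    (L : ι → k) (hL : 1 - s ≤ ∑ j, L j) :
    ∃ t : E, {z | ∀ j, L j ≤ b.coord j z} ⊆ t +ᵥ s • convexHull k (range b) := by
  have : Nonempty ι := b.nonempty
  set ε := (∑ j, L j - (1 - s)) / Fintype.card ι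
  have hε : 0 ≤ ε := div_nonneg (by linarith) (Nat.cast_nonneg _)
  set w : ι → k := fun j => L j - ε + s * b.coord j 0
  have hw : ∑ j, w j = 1 := by
    simp only [w, Finset.sum_add_distrib, Finset.sum_sub_distrib, ← Finset.mul_sum,
      b.sum_coord_apply_eq_one, Finset.sum_const, Finset.card_univ, nsmul_eq_mul, ε]
    field_simp
    ring
  refine ⟨Finset.univ.affineCombination k b w, fun z hz => (b.mem_vadd_smul_convexHull_iff hs).2
    fun j => ?_⟩
  rw [facetCoord, b.coord_apply_combination_of_mem (Finset.mem_univ j) hw]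
  linarith [hz j]

theorem Icc_facetCoord_subset_iUnion [Fintype ι] [Nontrivial ι] {κ : Type*} (x : κ → E)
    (τ : κ → k) (hτ : ∀ i, 0 ≤ τ i) (j : ι)
    (hcut : b.FacetTranslatesMeet j fun i => x i +ᵥ τ i • convexHull k (range b))
    (i₀ i : κ) :
    Icc (b.facetCoord j (x i₀) (τ i₀)) (b.facetCoord j (x i) (τ i)) ⊆
      ⋃ l, Icc (b.facetCoord j (x l) (τ l)) (b.facetCoord j (x l) (τ l) + τ l) := by
  intro r hr
  obtain ⟨k₀, hk₀⟩ := exists_ne j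
  have hk₀span : b k₀ ∈ affineSpan k (b '' {i | i ≠ j}) :=
    subset_affineSpan k _ ⟨k₀, hk₀, rfl⟩
  have hvertex : ∀ l, x l + τ l • b k₀ ∈ ⋃ i, x i +ᵥ τ i • convexHull k (range b) := fun l =>
    mem_iUnion.2 ⟨l, vadd_mem_vadd_set (smul_mem_smul_set
      (subset_convexHull k _ (mem_range_self k₀)))⟩
  -- `x l + τ l • b k₀` lies on the facet of the `l`-th homothet opposite its `j`-th vertex.
  have hcoord : ∀ l, b.coord j (x l + τ l • b k₀) = b.facetCoord j (x l) (τ l) := fun l => by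
    rw [b.coord_add_smul, b.coord_apply_ne hk₀.symm, facetCoord]
    ring
  obtain ⟨z, hz, rfl⟩ : r ∈ b.coord j '' segment k (x i₀ + τ i₀ • b k₀) (x i + τ i • b k₀) := by
    rwa [image_segment, hcoord, hcoord, segment_eq_Icc (hr.1.trans hr.2)]
  obtain ⟨l, _, ⟨w, hw, rfl⟩, hl⟩ := hcut (z - b k₀)
    ⟨z, ⟨b k₀, hk₀span, sub_add_cancel z (b k₀)⟩,
      segment_subset_convexHull (hvertex i₀) (hvertex i) hz⟩
  have hplane : b.coord j (z - b k₀ + w) = b.coord j z := by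
    rw [b.coord_add_of_mem_affineSpan hw, ← b.coord_add_of_mem_affineSpan hk₀span,
      sub_add_cancel]
  exact mem_iUnion.2 ⟨l, hplane ▸ b.coord_mem_Icc_of_mem_vadd_smul_convexHull (hτ l) hl j⟩

end AffineBasis

theorem AffineBasis.exists_vadd_smul_convexHull_superset_iUnion {ι κ E : Type*} [Fintype ι]
    [Nontrivial ι] [Fintype κ] [Nonempty κ] [AddCommGroup E] [Module ℝ E]
    (b : AffineBasis ι ℝ E) (x : κ → E) (τ : κ → ℝ) (hτ : ∀ i, 0 < τ i)
    (hcut : ∀ j, b.FacetTranslatesMeet j fun i => x i +ᵥ τ i • convexHull ℝ (range b)) :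
    ∃ t : E, (⋃ i, x i +ᵥ τ i • convexHull ℝ (range b)) ⊆
      t +ᵥ ((Fintype.card ι : ℝ) / 2 * ∑ i, τ i) • convexHull ℝ (range b) := by
  set B : κ → ι → ℝ := fun i j => b.facetCoord j (x i) (τ i)
  set m : ι → ℝ := fun j => Finset.univ.inf' Finset.univ_nonempty (B · j)
  have hcover : ∀ j i, Ico (m j) (B i j) ⊆ ⋃ l, Icc (B l j) (B l j + τ l) := by
    intro j i
    obtain ⟨i₀, -, hi₀⟩ := Finset.exists_mem_eq_inf' Finset.univ_nonempty (B · j)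
    rw [show m j = B i₀ j from hi₀]
    exact Ico_subset_Icc_self.trans
      (b.Icc_facetCoord_subset_iUnion x τ (fun l => (hτ l).le) j (hcut j) i₀ i)
  have hτsum : 0 < ∑ i, τ i := Finset.sum_pos (fun i _ => hτ i) Finset.univ_nonempty
  have hcard : (2 : ℝ) ≤ Fintype.card ι := by exact_mod_cast Fintype.one_lt_card
  have hm : 1 - (Fintype.card ι : ℝ) / 2 * ∑ i, τ i ≤ ∑ j, m j := by
    have hsum := Finset.sum_le_sum fun j (_ : j ∈ Finset.univ) =>
      sum_mul_le_of_Ico_subset_iUnion_Icc τ (B · j) (fun i => (hτ i).le) (hcover j)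
    have hrows : ∑ j, ∑ i, τ i * B i j = ∑ i, τ i - ∑ i, τ i ^ 2 := by
      simp only [Finset.sum_comm (γ := ι), ← Finset.mul_sum, B, sum_facetCoord, mul_sub,
        mul_one, Finset.sum_sub_distrib, sq]
    rw [hrows, Finset.sum_add_distrib, ← Finset.mul_sum, Finset.sum_const, Finset.card_univ,
      nsmul_eq_mul] at hsum
    have hsq : 0 ≤ ∑ i, τ i ^ 2 := Finset.sum_nonneg fun i _ => sq_nonneg _
    refine le_of_mul_le_mul_left ?_ hτsum
    nlinarith
  obtain ⟨t, ht⟩ := b.exists_setOf_le_coord_subset_vadd_smul_convexHull (by positivity) m hm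
  exact ⟨t, iUnion_subset fun i z hz => ht fun j => (Finset.inf'_le _ (Finset.mem_univ i)).trans
    (b.coord_mem_Icc_of_mem_vadd_smul_convexHull (hτ i).le hz j).1⟩

/-- **Akopyan–Balitskiy–Grigorev.** Let `T` be a `d`-dimensional simplex in `ℝ^d`
(the convex hull of the affinely independent points `v 0, …, v d`) and let
`𝒯 = {xᵢ + τᵢ T}` be a family of positive homothets of `T` such that every
hyperplane parallel to a facet of `T` (i.e. every translate of the affine hull of
the `d` vertices `{v i : i ≠ j}` for some `j`) which intersects `conv(⋃ 𝒯)`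
intersects some member of `𝒯`. Then `⋃ 𝒯` can be covered by a translate of
`((d+1)/2) (∑ τᵢ) T`. -/
theorem stmt_5 (d n : ℕ) (hn : 0 < n)
    (v : Fin (d + 1) → EuclideanSpace ℝ (Fin d)) (hv : AffineIndependent ℝ v)
    (T : Set (EuclideanSpace ℝ (Fin d))) (hT : T = convexHull ℝ (Set.range v))
    (x : Fin n → EuclideanSpace ℝ (Fin d)) (τ : Fin n → ℝ) (hτ : ∀ i, 0 < τ i)
    (hcut : ∀ (j : Fin (d + 1)) (c : EuclideanSpace ℝ (Fin d)),
      ((((fun y => c + y) '' (affineSpan ℝ (v '' {i | i ≠ j}) : Set (EuclideanSpace ℝ (Fin d)))) ∩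
          convexHull ℝ (⋃ i, x i +ᵥ τ i • T)).Nonempty →
        ∃ i, (((fun y => c + y) ''
            (affineSpan ℝ (v '' {i | i ≠ j}) : Set (EuclideanSpace ℝ (Fin d)))) ∩
          (x i +ᵥ τ i • T)).Nonempty)) :
    ∃ t : EuclideanSpace ℝ (Fin d),
      (⋃ i, x i +ᵥ τ i • T) ⊆ t +ᵥ ((((d : ℝ) + 1) / 2) * ∑ i, τ i) • T := by
  subst hT
  rcases Nat.eq_zero_or_pos d with rfl | hd
  · refine ⟨0, fun z _ => ?_⟩
    rw [(((convexHull_nonempty_iff.2 (range_nonempty v)).smul_set).vadd_set).eq_univ]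
    exact mem_univ z
  have : Nontrivial (Fin (d + 1)) := Fin.nontrivial_iff_two_le.2 (by omega)
  have : Nonempty (Fin n) := ⟨⟨0, hn⟩⟩
  let b : AffineBasis (Fin (d + 1)) ℝ (EuclideanSpace ℝ (Fin d)) :=
    ⟨v, hv, hv.affineSpan_eq_top_iff_card_eq_finrank_add_one.2 (by simp)⟩
  have := b.exists_vadd_smul_convexHull_superset_iUnion x τ hτ hcut
  rwa [Fintype.card_fin, Nat.cast_succ] at this
end

section
/- Let d ≥ 2 and n ≥ 2, let K be a convex body in ℝ^d, and let 𝒦 = {x_i + τ_i K : i = 1, …, n} (with all τ_i > 0) be a non-separable family of positive homothetic copies of K. Then ⋃𝒦 can be covered by a translate of ((d+1)/2)(∑_{i=1}^n τ_i) K. -/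
open Set Metric Pointwise
open scoped RealInnerProductSpace

/-- A finite family of sets in `ℝ^d` is non-separable (an NS-family) if no
hyperplane disjoint from the union strictly separates some members from all
the remaining members. -/
def NonSeparableFamily {d n : ℕ} (F : Fin n → Set (EuclideanSpace ℝ (Fin d))) : Prop :=
  ¬ (∃ (I : Finset (Fin n)) (u : EuclideanSpace ℝ (Fin d)) (α : ℝ),
      I.Nonempty ∧ I ≠ Finset.univ ∧ u ≠ 0 ∧
      (∀ i ∈ I, ∀ y ∈ F i, ⟪u, y⟫ < α) ∧
      (∀ i ∉ I, ∀ y ∈ F i, α < ⟪u, y⟫))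

/-!
Fix a direction `u`. The `i`-th body projects onto an interval `[bᵢ - τᵢ w, bᵢ]`, where `w` is the
width of `K` in direction `u`, and non-separability says that these intervals leave no gap between
any two top endpoints `bᵢ < bₖ`. Comparing lengths gives `bₖ - bᵢ ≤ w ∑_{bⱼ > bᵢ} τⱼ`, and summing
with weights `τᵢ` gives `∑ τᵢ (bₖ - bᵢ) ≤ w ((∑ τᵢ)² - ∑ τᵢ²) / 2`. A Minkowski centre `c` of `K`
(one with `-(K - c) ⊆ d (K - c)`, which exists by Helly's theorem) bounds `w` by
`(d + 1) (h_K(u) - ⟪u, c⟫)`, `h_K` the support function of `K`. The resulting inequalities between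
support functions say that the union lies in `t + ((d + 1) / 2) (∑ τᵢ) K` for an explicit `t`.
-/

section MinkowskiCenter

variable {E : Type*}

theorem Convex.smul_centroid_sub_mem_smul [AddCommGroup E] [Module ℝ E] {K : Set E}
    (hK : Convex ℝ K) {ι : Type*} {s : Finset ι} {f : ι → E} (hf : ∀ i ∈ s, f i ∈ K) {r : ℝ}
    (hr : 0 < r) (hs : (s.card : ℝ) ≤ r + 1) {j : ι} (hj : j ∈ s) :
    (r + 1) • ((s.card : ℝ)⁻¹ • ∑ i ∈ s, f i) - f j ∈ r • K := by
  classical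
  have hm : (0 : ℝ) < s.card := by exact_mod_cast Finset.card_pos.mpr ⟨j, hj⟩
  set a : ℝ := (r + 1) / s.card with ha_def
  have ha : 1 ≤ a := (one_le_div hm).mpr hs
  set w : ι → ℝ := fun i => (a - if i = j then 1 else 0) / r
  have hw₀ : ∀ i ∈ s, 0 ≤ w i := fun i _ => div_nonneg (by split_ifs <;> linarith) hr.le
  have hw₁ : ∑ i ∈ s, w i = 1 := by
    simp only [w, ← Finset.sum_div, Finset.sum_sub_distrib, Finset.sum_ite_eq', if_pos hj,
      Finset.sum_const, nsmul_eq_mul, a]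
    field_simp
    ring
  refine ⟨∑ i ∈ s, w i • f i, hK.sum_mem hw₀ hw₁ hf, ?_⟩
  calc r • ∑ i ∈ s, w i • f i = ∑ i ∈ s, (a • f i - if i = j then f i else 0) := by
        rw [Finset.smul_sum]
        refine Finset.sum_congr rfl fun i _ => ?_
        rw [smul_smul, mul_div_cancel₀ _ hr.ne', sub_smul, ite_smul, one_smul, zero_smul]
    _ = (r + 1) • ((s.card : ℝ)⁻¹ • ∑ i ∈ s, f i) - f j := by
        rw [Finset.sum_sub_distrib, Finset.sum_ite_eq', if_pos hj, ← Finset.smul_sum, smul_smul,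
          ha_def, div_eq_mul_inv]

theorem Convex.exists_forall_smul_sub_mem_smul [NormedAddCommGroup E] [NormedSpace ℝ E]
    [FiniteDimensional ℝ E] {K : Set E} (hK : Convex ℝ K) (hKc : IsCompact K)
    (hE : 0 < Module.finrank ℝ E) :
    ∃ c : E, ∀ y ∈ K,
      ((Module.finrank ℝ E : ℝ) + 1) • c - y ∈ (Module.finrank ℝ E : ℝ) • K := by
  set r : ℝ := (Module.finrank ℝ E : ℝ)
  have hr : 0 < r := Nat.cast_pos.mpr hE
  let C : K → Set E := fun y => (r + 1)⁻¹ • ((y : E) +ᵥ r • K)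
  have hC : ∀ (y : K) (c : E), c ∈ C y ↔ (r + 1) • c - y ∈ r • K := fun y c => by
    rw [mem_inv_smul_set_iff₀ (by positivity), mem_vadd_set_iff_neg_vadd_mem, vadd_eq_add,
      neg_add_eq_sub]
  obtain ⟨c, hc⟩ := Convex.helly_theorem_compact' (𝕜 := ℝ) (F := C)
    (fun y => ((hK.smul r).vadd (y : E)).smul _) (fun y => ((hKc.smul r).vadd (y : E)).smul _)
    fun I hI => by
      rcases I.eq_empty_or_nonempty with rfl | ⟨j, hj⟩
      · simp
      refine ⟨((I.card : ℝ))⁻¹ • ∑ i ∈ I, (i : E), mem_iInter₂.mpr fun y hy => (hC y _).mpr ?_⟩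
      exact hK.smul_centroid_sub_mem_smul (fun i _ => i.2) hr
        (by simp only [r]; exact_mod_cast hI) hy
  exact ⟨c, fun y hy => (hC ⟨y, hy⟩ c).mp (mem_iInter.mp hc ⟨y, hy⟩)⟩

end MinkowskiCenter

section IntervalCharging

variable {ι : Type*}

theorem sub_le_sum_of_Ioo_subset_biUnion_Icc {a b : ℝ} {s : Finset ι} {l r : ι → ℝ}
    (hlr : ∀ j ∈ s, l j ≤ r j) (h : Ioo a b ⊆ ⋃ j ∈ s, Icc (l j) (r j)) :
    b - a ≤ ∑ j ∈ s, (r j - l j) := by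
  have hvol : ENNReal.ofReal (b - a) ≤ ENNReal.ofReal (∑ j ∈ s, (r j - l j)) := by
    calc ENNReal.ofReal (b - a) = MeasureTheory.volume (Ioo a b) := (Real.volume_Ioo).symm
      _ ≤ ∑ j ∈ s, MeasureTheory.volume (Icc (l j) (r j)) :=
          (MeasureTheory.measure_mono h).trans (MeasureTheory.measure_biUnion_finset_le _ _)
      _ = ENNReal.ofReal (∑ j ∈ s, (r j - l j)) := by
          simp only [Real.volume_Icc]
          exact (ENNReal.ofReal_sum_of_nonneg fun j hj => sub_nonneg.mpr (hlr j hj)).symm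
  exact (ENNReal.ofReal_le_ofReal_iff
    (Finset.sum_nonneg fun j hj => sub_nonneg.mpr (hlr j hj))).mp hvol

theorem sum_mul_sum_filter_lt_le [Fintype ι] (b τ : ι → ℝ) (hτ : ∀ i, 0 ≤ τ i) :
    ∑ i, τ i * ∑ j with b i < b j, τ j ≤ ((∑ i, τ i) ^ 2 - ∑ i, τ i ^ 2) / 2 := by
  classical
  have hlt : ∑ i, τ i * ∑ j with b i < b j, τ j
      = ∑ i, ∑ j, if b i < b j then τ i * τ j else 0 := by
    simp only [Finset.sum_filter, Finset.mul_sum, mul_ite, mul_zero]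
  have hgt : ∑ i, τ i * ∑ j with b i < b j, τ j
      = ∑ i, ∑ j, if b j < b i then τ i * τ j else 0 := by
    rw [hlt, Finset.sum_comm]
    simp only [mul_comm]
  have hdiag : ∑ i, τ i ^ 2 = ∑ i, ∑ j, if i = j then τ i * τ j else 0 := by
    simp only [Finset.sum_ite_eq, Finset.mem_univ, if_true, sq]
  have hsq : (∑ i, τ i) ^ 2 = ∑ i, ∑ j, τ i * τ j := by
    rw [sq, Finset.sum_mul_sum]
  have hpoint : ∀ i j, ((if b i < b j then τ i * τ j else 0) + (if b j < b i then τ i * τ j else 0))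
      + (if i = j then τ i * τ j else 0) ≤ τ i * τ j := fun i j => by
    have := mul_nonneg (hτ i) (hτ j)
    by_cases hij : i = j
    · subst hij; simp
    · simp only [hij, if_false]; split_ifs <;> linarith
  have hsum := Finset.sum_le_sum fun i (_ : i ∈ Finset.univ) =>
    Finset.sum_le_sum fun j (_ : j ∈ Finset.univ) => hpoint i j
  simp only [Finset.sum_add_distrib] at hsum
  linarith

theorem sum_mul_sub_le_of_Ioo_subset_iUnion_Icc [Fintype ι] {τ b : ι → ℝ} {W : ℝ}
    (hτ : ∀ i, 0 ≤ τ i) (hW : 0 ≤ W)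
    (hcov : ∀ i k, Ioo (b i) (b k) ⊆ ⋃ j, Icc (b j - τ j * W) (b j)) (k : ι) :
    ∑ i, τ i * (b k - b i) ≤ W * (((∑ i, τ i) ^ 2 - ∑ i, τ i ^ 2) / 2) := by
  have hcharge : ∀ i, b k - b i ≤ W * ∑ j with b i < b j, τ j := fun i => by
    have hcov' : Ioo (b i) (b k) ⊆
        ⋃ j ∈ Finset.univ.filter (b i < b ·), Icc (b j - τ j * W) (b j) := by
      intro α hα
      obtain ⟨j, hj⟩ := mem_iUnion.mp (hcov i k hα)
      exact mem_biUnion (by simpa using hα.1.trans_le hj.2) hj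
    have hlen := sub_le_sum_of_Ioo_subset_biUnion_Icc
      (fun j _ => sub_le_self _ (mul_nonneg (hτ j) hW)) hcov'
    simpa only [sub_sub_cancel, mul_comm W, Finset.sum_mul] using hlen
  calc ∑ i, τ i * (b k - b i) ≤ W * ∑ i, τ i * ∑ j with b i < b j, τ j := by
        rw [Finset.mul_sum]
        refine Finset.sum_le_sum fun i _ => ?_
        rw [mul_left_comm]
        exact mul_le_mul_of_nonneg_left (hcharge i) (hτ i)
    _ ≤ W * (((∑ i, τ i) ^ 2 - ∑ i, τ i ^ 2) / 2) :=
        mul_le_mul_of_nonneg_left (sum_mul_sum_filter_lt_le b τ hτ) hW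

end IntervalCharging

section Support

variable {E : Type*} [NormedAddCommGroup E] [InnerProductSpace ℝ E]

theorem Convex.mem_of_forall_exists_inner_le [CompleteSpace E] {C : Set E} (hC : Convex ℝ C)
    (hCc : IsClosed C) {p : E} (h : ∀ u, ∃ y ∈ C, ⟪u, p⟫ ≤ ⟪u, y⟫) : p ∈ C := by
  by_contra hp
  obtain ⟨f, β, hfC, hfp⟩ := geometric_hahn_banach_closed_point hC hCc hp
  obtain ⟨y, hy, hle⟩ := h ((InnerProductSpace.toDual ℝ E).symm f)
  simp only [InnerProductSpace.toDual_symm_apply] at hle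
  linarith [hfC y hy]

theorem inner_eq_of_mem_vadd_smul {K : Set E} {x y : E} {τ : ℝ} (hy : y ∈ x +ᵥ τ • K) (u : E) :
    ∃ k ∈ K, ⟪u, y⟫ = ⟪u, x⟫ + τ * ⟪u, k⟫ := by
  obtain ⟨_, ⟨k, hk, rfl⟩, rfl⟩ := hy
  exact ⟨k, hk, by simp only [vadd_eq_add, inner_add_right, real_inner_smul_right]⟩

theorem inner_smul_sub_le_of_smul_sub_mem_smul {K : Set E} {c y : E} {r S : ℝ} (hr : 0 ≤ r)
    (h : (r + 1) • c - y ∈ r • K) {u : E} (hS : ∀ k ∈ K, ⟪u, k⟫ ≤ S) :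
    (r + 1) * ⟪u, c⟫ - ⟪u, y⟫ ≤ r * S := by
  obtain ⟨k, hk, hck⟩ := h
  have hck' := congrArg (⟪u, ·⟫) hck
  simp only [inner_sub_right, real_inner_smul_right] at hck'
  linarith [mul_le_mul_of_nonneg_left (hS k hk) hr]

end Support

/-- The `τ`-weighted centroid of the `xᵢ`, shifted along `c` so that, with `T = ∑ τᵢ`,
`λ = (d + 1) / 2` and `h = ⟪u, kmax⟫`, the bound
`T ⟪u, p⟫ ≤ ∑ τᵢ ⟪u, xᵢ⟫ + (∑ τᵢ²) h + λ (T² - ∑ τᵢ²) (h - ⟪u, c⟫)` implies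
`⟪u, p - t⟫ ≤ λ T h`. -/
noncomputable def coveringTranslate {d n : ℕ} (x : Fin n → EuclideanSpace ℝ (Fin d))
    (τ : Fin n → ℝ) (c : EuclideanSpace ℝ (Fin d)) : EuclideanSpace ℝ (Fin d) :=
  (∑ i, τ i)⁻¹ • (∑ i, τ i • x i - ((((d : ℝ) + 1) / 2) * (∑ i, τ i) ^ 2 - ∑ i, τ i ^ 2) • c)

namespace NonSeparableFamily

variable {d n : ℕ}

theorem Ioo_subset_iUnion_Icc {F : Fin n → Set (EuclideanSpace ℝ (Fin d))}
    (hF : NonSeparableFamily F) (hne : ∀ i, (F i).Nonempty) (u : EuclideanSpace ℝ (Fin d))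
    {lo hi : Fin n → ℝ} (hlo : ∀ i, ∀ y ∈ F i, lo i ≤ ⟪u, y⟫)
    (hhi : ∀ i, ∀ y ∈ F i, ⟪u, y⟫ ≤ hi i) (i k : Fin n) :
    Ioo (hi i) (hi k) ⊆ ⋃ j, Icc (lo j) (hi j) := by
  rintro α ⟨hiα, hαk⟩
  by_contra hα
  simp only [mem_iUnion, mem_Icc, not_exists, not_and, not_le] at hα
  refine hF ⟨Finset.univ.filter (hi · < α), u, α, ⟨i, by simpa using hiα⟩, fun hI => ?_, ?_,
    fun j hj y hy => ?_, fun j hj y hy => ?_⟩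
  · have hkI : k ∈ Finset.univ.filter (hi · < α) := by rw [hI]; exact Finset.mem_univ k
    simp only [Finset.mem_filter, Finset.mem_univ, true_and] at hkI
    linarith
  · rintro rfl
    obtain ⟨y, hy⟩ := hne i
    obtain ⟨z, hz⟩ := hne k
    have hy' := hhi i y hy
    have hz' := hlo k z hz
    rw [inner_zero_left] at hy' hz'
    linarith [hα k (by linarith)]
  · simp only [Finset.mem_filter, Finset.mem_univ, true_and] at hj
    exact (hhi j y hy).trans_lt hj
  · simp only [Finset.mem_filter, Finset.mem_univ, true_and, not_lt] at hj
    by_contra hy'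
    linarith [hα j (le_trans (hlo j y hy) (not_lt.mp hy'))]

theorem sum_mul_inner_le {K : Set (EuclideanSpace ℝ (Fin d))}
    {x : Fin n → EuclideanSpace ℝ (Fin d)} {τ : Fin n → ℝ} (hτ : ∀ i, 0 ≤ τ i)
    (hns : NonSeparableFamily (fun i => x i +ᵥ τ i • K)) (hK : K.Nonempty)
    {u kmax kmin : EuclideanSpace ℝ (Fin d)} (hmax : ∀ k ∈ K, ⟪u, k⟫ ≤ ⟪u, kmax⟫)
    (hmin : ∀ k ∈ K, ⟪u, kmin⟫ ≤ ⟪u, k⟫) {k : Fin n} {p : EuclideanSpace ℝ (Fin d)}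
    (hp : p ∈ x k +ᵥ τ k • K) :
    (∑ i, τ i) * ⟪u, p⟫ ≤ ∑ i, τ i * ⟪u, x i⟫ + (∑ i, τ i ^ 2) * ⟪u, kmax⟫
      + (⟪u, kmax⟫ - ⟪u, kmin⟫) * (((∑ i, τ i) ^ 2 - ∑ i, τ i ^ 2) / 2) := by
  set W := ⟪u, kmax⟫ - ⟪u, kmin⟫
  set hi : Fin n → ℝ := fun i => ⟪u, x i⟫ + τ i * ⟪u, kmax⟫
  have hhi : ∀ i, ∀ y ∈ x i +ᵥ τ i • K, ⟪u, y⟫ ≤ hi i := fun i y hy => by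
    obtain ⟨k, hk, hyk⟩ := inner_eq_of_mem_vadd_smul hy u
    rw [hyk]
    linarith [mul_le_mul_of_nonneg_left (hmax k hk) (hτ i)]
  have hlo : ∀ i, ∀ y ∈ x i +ᵥ τ i • K, hi i - τ i * W ≤ ⟪u, y⟫ := fun i y hy => by
    obtain ⟨k, hk, hyk⟩ := inner_eq_of_mem_vadd_smul hy u
    rw [hyk]
    linarith [mul_le_mul_of_nonneg_left (hmin k hk) (hτ i)]
  obtain ⟨k₀, hk₀⟩ := hK
  have hcov := hns.Ioo_subset_iUnion_Icc
    (fun i => ⟨_, vadd_mem_vadd_set (smul_mem_smul_set hk₀)⟩) u hlo hhi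
  have hcharge := sum_mul_sub_le_of_Ioo_subset_iUnion_Icc hτ
    (sub_nonneg.mpr ((hmin k₀ hk₀).trans (hmax k₀ hk₀))) hcov k
  have hsplit : (∑ i, τ i) * hi k
      = ∑ i, τ i * ⟪u, x i⟫ + (∑ i, τ i ^ 2) * ⟪u, kmax⟫ + ∑ i, τ i * (hi k - hi i) := by
    simp only [Finset.sum_mul, ← Finset.sum_add_distrib]
    exact Finset.sum_congr rfl fun i _ => by ring
  calc (∑ i, τ i) * ⟪u, p⟫ ≤ (∑ i, τ i) * hi k :=
        mul_le_mul_of_nonneg_left (hhi k p hp) (Finset.sum_nonneg fun i _ => hτ i)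
    _ ≤ _ := by linarith

theorem inner_sub_coveringTranslate_le (hd : 1 ≤ d)
    {K : Set (EuclideanSpace ℝ (Fin d))} {x : Fin n → EuclideanSpace ℝ (Fin d)}
    {τ : Fin n → ℝ} (hτ : ∀ i, 0 < τ i) (hns : NonSeparableFamily (fun i => x i +ᵥ τ i • K))
    {c : EuclideanSpace ℝ (Fin d)} (hc : ∀ y ∈ K, ((d : ℝ) + 1) • c - y ∈ (d : ℝ) • K)
    {u kmax kmin : EuclideanSpace ℝ (Fin d)} (hkmax : kmax ∈ K) (hkmin : kmin ∈ K)
    (hmax : ∀ k ∈ K, ⟪u, k⟫ ≤ ⟪u, kmax⟫) (hmin : ∀ k ∈ K, ⟪u, kmin⟫ ≤ ⟪u, k⟫) {k : Fin n}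
    {p : EuclideanSpace ℝ (Fin d)} (hp : p ∈ x k +ᵥ τ k • K) :
    ⟪u, p - coveringTranslate x τ c⟫ ≤ (((d : ℝ) + 1) / 2 * ∑ i, τ i) * ⟪u, kmax⟫ := by
  rw [coveringTranslate]
  have hbound := hns.sum_mul_inner_le (fun i => (hτ i).le) ⟨kmax, hkmax⟩ hmax hmin hp
  have hcen := inner_smul_sub_le_of_smul_sub_mem_smul (Nat.cast_nonneg d) (hc kmin hkmin) hmax
  set T := ∑ i, τ i
  set Q := ∑ i, τ i ^ 2
  set lam : ℝ := ((d : ℝ) + 1) / 2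
  have hT : 0 < T :=
    (hτ k).trans_le (Finset.single_le_sum (fun i _ => (hτ i).le) (Finset.mem_univ k))
  have hQ : 0 ≤ Q := Finset.sum_nonneg fun i _ => sq_nonneg (τ i)
  have hQT : Q ≤ T ^ 2 := Finset.sum_sq_le_sq_sum_of_nonneg fun i _ => (hτ i).le
  have hd' : (1 : ℝ) ≤ d := Nat.one_le_cast.mpr hd
  have hlam : 1 ≤ lam := by simp only [lam]; linarith
  have hγ : ⟪u, c⟫ ≤ ⟪u, kmax⟫ := by nlinarith [hmin kmax hkmax]
  have hW : ⟪u, kmax⟫ - ⟪u, kmin⟫ ≤ 2 * lam * (⟪u, kmax⟫ - ⟪u, c⟫) := by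
    simp only [lam]; linarith
  have hsum : ⟪u, ∑ i, τ i • x i⟫ = ∑ i, τ i * ⟪u, x i⟫ := by
    simp only [inner_sum, real_inner_smul_right]
  rw [inner_sub_right, real_inner_smul_right, inner_sub_right, real_inner_smul_right, hsum]
  refine le_of_mul_le_mul_left ?_ hT
  rw [mul_sub, mul_inv_cancel_left₀ hT.ne']
  nlinarith [mul_le_mul_of_nonneg_right hW (sub_nonneg.mpr hQT),
    mul_nonneg (mul_nonneg (sub_nonneg.mpr hlam) hQ) (sub_nonneg.mpr hγ)]

end NonSeparableFamily

theorem stmt_6_general (d n : ℕ) (hd : 2 ≤ d)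
    (K : Set (EuclideanSpace ℝ (Fin d)))
    (hKconv : Convex ℝ K) (hKcpt : IsCompact K)
    (x : Fin n → EuclideanSpace ℝ (Fin d)) (τ : Fin n → ℝ) (hτ : ∀ i, 0 < τ i)
    (hns : NonSeparableFamily (fun i => x i +ᵥ τ i • K)) :
    ∃ t : EuclideanSpace ℝ (Fin d),
      (⋃ i, x i +ᵥ τ i • K) ⊆ t +ᵥ ((((d : ℝ) + 1) / 2) * ∑ i, τ i) • K := by
  obtain ⟨c, hc⟩ := hKconv.exists_forall_smul_sub_mem_smul hKcpt
    (by rw [finrank_euclideanSpace_fin]; omega)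
  rw [finrank_euclideanSpace_fin] at hc
  refine ⟨coveringTranslate x τ c, fun p hp => ?_⟩
  obtain ⟨k, hpk⟩ := mem_iUnion.mp hp
  have hK : K.Nonempty := by obtain ⟨_, ⟨y, hy, -⟩, -⟩ := hpk; exact ⟨y, hy⟩
  rw [mem_vadd_set_iff_neg_vadd_mem, vadd_eq_add, neg_add_eq_sub]
  refine (hKconv.smul _).mem_of_forall_exists_inner_le (hKcpt.smul _).isClosed fun u => ?_
  have hcont : ContinuousOn (fun y => ⟪u, y⟫) K :=
    (continuous_const.inner continuous_id).continuousOn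
  obtain ⟨kmax, hkmax, hmax⟩ : ∃ k ∈ K, ∀ y ∈ K, ⟪u, y⟫ ≤ ⟪u, k⟫ :=
    hKcpt.exists_isMaxOn hK hcont
  obtain ⟨kmin, hkmin, hmin⟩ : ∃ k ∈ K, ∀ y ∈ K, ⟪u, k⟫ ≤ ⟪u, y⟫ :=
    hKcpt.exists_isMinOn hK hcont
  refine ⟨_, smul_mem_smul_set hkmax, ?_⟩
  rw [real_inner_smul_right]
  exact hns.inner_sub_coveringTranslate_le (by omega) hτ hc hkmax hkmin hmax hmin hpk

/-- If `𝒦 = {xᵢ + τᵢ K}` is an NS-family of positive homothets of a convex body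
`K` in `ℝ^d` (`d ≥ 2`, `n ≥ 2`), then `⋃ 𝒦` can be covered by a translate of
`((d+1)/2) (∑ τᵢ) K`. -/
theorem stmt_6 (d n : ℕ) (hd : 2 ≤ d) (hn : 2 ≤ n)
    (K : Set (EuclideanSpace ℝ (Fin d)))
    (hKconv : Convex ℝ K) (hKcpt : IsCompact K) (hKint : (interior K).Nonempty)
    (x : Fin n → EuclideanSpace ℝ (Fin d)) (τ : Fin n → ℝ) (hτ : ∀ i, 0 < τ i)
    (hns : NonSeparableFamily (fun i => x i +ᵥ τ i • K)) :
    ∃ t : EuclideanSpace ℝ (Fin d),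
      (⋃ i, x i +ᵥ τ i • K) ⊆ t +ᵥ ((((d : ℝ) + 1) / 2) * ∑ i, τ i) • K :=
  stmt_6_general d n hd K hKconv hKcpt x τ hτ hns
end

section
/- Let 𝒦 = {x_i + λ_i K : i = 1, …, n} (with all λ_i > 0) be a non-separable family of positive homothetic copies of a convex body K in ℝ^d. Then diam(conv(⋃𝒦)) ≤ (∑_{i=1}^n λ_i) · diam(K). -/
open Set Metric Pointwise
open scoped RealInnerProductSpace

/-- For any NS-family `𝒦 = {xᵢ + λᵢ K}` of positive homothets of a convex body
`K` in `ℝ^d`, the diameter of `conv(⋃ 𝒦)` is at most `(∑ λᵢ) · diam K`. -/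
theorem stmt_7 (d n : ℕ) (hn : 0 < n)
    (K : Set (EuclideanSpace ℝ (Fin d)))
    (hKconv : Convex ℝ K) (hKcpt : IsCompact K) (hKint : (interior K).Nonempty)
    (x : Fin n → EuclideanSpace ℝ (Fin d)) (l : Fin n → ℝ) (hl : ∀ i, 0 < l i)
    (hns : NonSeparableFamily (fun i => x i +ᵥ l i • K)) :
    Metric.diam (convexHull ℝ (⋃ i, x i +ᵥ l i • K)) ≤ (∑ i, l i) * Metric.diam K := by
  have : Nonempty (Fin n) := ⟨⟨0, hn⟩⟩
  have hKne : K.Nonempty := hKint.mono interior_subset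
  set S : Fin n → Set (EuclideanSpace ℝ (Fin d)) := fun i => x i +ᵥ l i • K with hS
  have hSne : ∀ i, (S i).Nonempty := fun i =>
    ⟨x i + l i • hKne.choose, ⟨l i • hKne.choose, Set.smul_mem_smul_set hKne.choose_spec, rfl⟩⟩
  have hScpt : ∀ i, IsCompact (S i) := fun i => (hKcpt.smul (l i)).vadd (x i)
  have hSconv : ∀ i, Convex ℝ (S i) := fun i => (hKconv.smul (l i)).vadd (x i)
  -- pointwise distance bound inside each member
  have hSdist : ∀ i, ∀ y ∈ S i, ∀ z ∈ S i, dist y z ≤ l i * Metric.diam K := by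
    rintro i y ⟨y', ⟨ky, hky, rfl⟩, rfl⟩ z ⟨z', ⟨kz, hkz, rfl⟩, rfl⟩
    have : dist (x i +ᵥ l i • ky) (x i +ᵥ l i • kz) = l i * dist ky kz := by
      simp only [vadd_eq_add, dist_add_left, dist_smul₀, Real.norm_eq_abs,
        abs_of_pos (hl i)]
    rw [this]
    exact mul_le_mul_of_nonneg_left (dist_le_diam_of_mem hKcpt.isBounded hky hkz) (hl i).le
  have hnonneg : 0 ≤ (∑ i, l i) * Metric.diam K :=
    mul_nonneg (Finset.sum_nonneg fun i _ => (hl i).le) Metric.diam_nonneg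
  apply Metric.diam_le_of_forall_dist_le hnonneg
  intro p hp q hq
  rcases eq_or_ne p q with rfl | hpq
  · simpa using hnonneg
  set u : EuclideanSpace ℝ (Fin d) := p - q with hu
  have hune : u ≠ 0 := sub_ne_zero.2 hpq
  have hupos : 0 < ‖u‖ := norm_pos_iff.2 hune
  set f : EuclideanSpace ℝ (Fin d) → ℝ := fun y => ⟪u, y⟫ with hf
  have hflin : IsLinearMap ℝ f := ⟨fun a b => inner_add_right _ _ _, fun c a => inner_smul_right _ _ _⟩
  have hfcont : Continuous f := Continuous.inner continuous_const continuous_id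
  set T : Fin n → Set ℝ := fun i => f '' S i with hT
  have hTcpt : ∀ i, IsCompact (T i) := fun i => (hScpt i).image hfcont
  have hTconn : ∀ i, IsConnected (T i) := fun i =>
    ⟨(hSne i).image f, (hSconv i).isPreconnected.image f hfcont.continuousOn⟩
  set a : Fin n → ℝ := fun i => sInf (T i) with ha
  set b : Fin n → ℝ := fun i => sSup (T i) with hb
  have hTIcc : ∀ i, T i = Icc (a i) (b i) := fun i =>
    eq_Icc_of_connected_compact (hTconn i) (hTcpt i)
  have hab : ∀ i, a i ≤ b i := fun i => by
    have h2 : (T i).Nonempty := (hSne i).image f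
    rw [hTIcc i] at h2
    exact nonempty_Icc.1 h2
  -- width bound
  have hwidth : ∀ i, b i - a i ≤ ‖u‖ * (l i * Metric.diam K) := by
    intro i
    obtain ⟨yb, hyb, hfyb⟩ : b i ∈ T i := by rw [hTIcc i]; exact ⟨hab i, le_refl _⟩
    obtain ⟨ya, hya, hfya⟩ : a i ∈ T i := by rw [hTIcc i]; exact ⟨le_refl _, hab i⟩
    have h1 : b i - a i = ⟪u, yb - ya⟫ := by
      rw [inner_sub_right, ← hfyb, ← hfya]
    rw [h1]
    calc ⟪u, yb - ya⟫ ≤ ‖u‖ * ‖yb - ya‖ := real_inner_le_norm _ _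
      _ ≤ ‖u‖ * (l i * Metric.diam K) := by
          apply mul_le_mul_of_nonneg_left _ (norm_nonneg u)
          rw [← dist_eq_norm]
          exact hSdist i yb hyb ya hya
  set m : ℝ := Finset.univ.inf' Finset.univ_nonempty a with hm
  set M : ℝ := Finset.univ.sup' Finset.univ_nonempty b with hM
  -- covering
  have hcover : Icc m M ⊆ ⋃ i, Icc (a i) (b i) := by
    intro α hα
    by_contra hgap
    simp only [Set.mem_iUnion, not_exists] at hgap
    apply hns
    refine ⟨Finset.univ.filter (fun i => b i < α), u, α, ?_, ?_, hune, ?_, ?_⟩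
    · obtain ⟨i₀, -, hi₀⟩ := Finset.exists_mem_eq_inf' Finset.univ_nonempty a
      refine ⟨i₀, Finset.mem_filter.2 ⟨Finset.mem_univ _, ?_⟩⟩
      have hai : a i₀ ≤ α := hi₀ ▸ hα.1
      by_contra h
      exact hgap i₀ ⟨hai, not_lt.1 h⟩
    · obtain ⟨i₁, -, hi₁⟩ := Finset.exists_mem_eq_sup' Finset.univ_nonempty b
      intro hEq
      have h2 : i₁ ∈ Finset.univ.filter (fun i => b i < α) := by
        rw [hEq]; exact Finset.mem_univ i₁
      have hbi : b i₁ < α := (Finset.mem_filter.1 h2).2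
      exact absurd (hi₁ ▸ hα.2) (not_le.2 hbi)
    · intro i hi y hy
      have hbi : b i < α := (Finset.mem_filter.1 hi).2
      have : f y ∈ T i := ⟨y, hy, rfl⟩
      rw [hTIcc i] at this
      exact lt_of_le_of_lt this.2 hbi
    · intro i hi y hy
      have hbi : α ≤ b i := not_lt.1 fun h => hi (Finset.mem_filter.2 ⟨Finset.mem_univ _, h⟩)
      have hai : α < a i := by
        by_contra h
        exact hgap i ⟨not_lt.1 h, hbi⟩
      have : f y ∈ T i := ⟨y, hy, rfl⟩
      rw [hTIcc i] at this
      exact lt_of_lt_of_le hai this.1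
  -- p, q projections lie in [m, M]
  have hrange : ∀ r ∈ convexHull ℝ (⋃ i, S i), f r ∈ Icc m M := by
    intro r hr
    have h1 : f r ∈ f '' convexHull ℝ (⋃ i, S i) := ⟨r, hr, rfl⟩
    rw [hflin.image_convexHull] at h1
    have h2 : f '' ⋃ i, S i ⊆ Icc m M := by
      rw [Set.image_iUnion]
      refine Set.iUnion_subset fun i => ?_
      have h3 : T i ⊆ Icc m M := by
        rw [hTIcc i]
        exact Icc_subset_Icc (Finset.inf'_le a (Finset.mem_univ i))
          (Finset.le_sup' b (Finset.mem_univ i))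
      exact h3
    exact convexHull_min h2 (convex_Icc m M) h1
  have hmM : m ≤ M := (hrange p hp).1.trans (hrange p hp).2
  -- measure argument: M - m ≤ ∑ (b i - a i)
  have hsum : M - m ≤ ∑ i, (b i - a i) := by
    have h1 : ENNReal.ofReal (M - m) ≤ ∑ i, ENNReal.ofReal (b i - a i) := by
      calc ENNReal.ofReal (M - m) = MeasureTheory.volume (Icc m M) := (Real.volume_Icc).symm
        _ ≤ MeasureTheory.volume (⋃ i, Icc (a i) (b i)) :=
            MeasureTheory.measure_mono hcover
        _ ≤ ∑ i, MeasureTheory.volume (Icc (a i) (b i)) :=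
            MeasureTheory.measure_iUnion_fintype_le _ _
        _ = ∑ i, ENNReal.ofReal (b i - a i) := by simp [Real.volume_Icc]
    rw [← ENNReal.ofReal_sum_of_nonneg (fun i _ => sub_nonneg.2 (hab i))] at h1
    exact (ENNReal.ofReal_le_ofReal_iff
      (Finset.sum_nonneg fun i _ => sub_nonneg.2 (hab i))).1 h1
  -- conclude
  have hkey : ‖u‖ ^ 2 ≤ ‖u‖ * ((∑ i, l i) * Metric.diam K) := by
    have h1 : ‖u‖ ^ 2 = f p - f q := by
      show ‖u‖ ^ 2 = ⟪u, p⟫ - ⟪u, q⟫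
      rw [← inner_sub_right, ← hu, real_inner_self_eq_norm_sq]
    have h2 : f p - f q ≤ M - m := sub_le_sub (hrange p hp).2 (hrange q hq).1
    have h3 : (∑ i, (b i - a i)) ≤ ‖u‖ * ((∑ i, l i) * Metric.diam K) := by
      calc (∑ i, (b i - a i)) ≤ ∑ i, ‖u‖ * (l i * Metric.diam K) :=
            Finset.sum_le_sum fun i _ => hwidth i
        _ = ‖u‖ * ((∑ i, l i) * Metric.diam K) := by
            rw [← Finset.mul_sum, ← Finset.sum_mul]
    linarith
  have : ‖u‖ ≤ (∑ i, l i) * Metric.diam K := by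
    nlinarith [hupos]
  rw [dist_eq_norm]
  exact this
end

section
/- Let ℱ = {K_1, …, K_n} be a family of convex bodies in ℝ^d, and let ℱ₁ and ℱ₂ be subfamilies with ℱ₁ ∩ ℱ₂ = ∅ and ℱ₁ ∪ ℱ₂ = ℱ. Then there is a hyperplane strictly separating ⋃ℱ₁ from ⋃ℱ₂ if and only if for every subfamily 𝒢 ⊆ ℱ of cardinality at most d+2, the set ⋃(ℱ₁ ∩ 𝒢) can be strictly separated from ⋃(ℱ₂ ∩ 𝒢) by a hyperplane. The same equivalence holds with non-strict separation in place of strict separation on both sides. -/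
/-!
A pair `(u, α) ∈ ℝ^d × ℝ` puts `K i` on the prescribed side of `⟪u, ·⟫ = α` iff it lies in a
set `C i ⊆ ℝ^(d+1)` that is an intersection of half-spaces, one for each point of `K i`. So
Helly's theorem in dimension `d + 1` produces a common point of all `C i` from common points of
any `d + 2` of them. The only non-convex requirement, `u ≠ 0`, is recovered afterwards: for strict
separation because `u = 0` cannot have nonempty sets on both sides; for weak separation by also
demanding strict separation of the interiors, a convex condition that weak separation implies
when `u ≠ 0`. If all bodies lie on one side, any `u ≠ 0` works with `α` large, by compactness.
-/

open Set Module
open scoped RealInnerProductSpace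

variable {E ι : Type*} [NormedAddCommGroup E] [InnerProductSpace ℝ E]

def Separates (r : ℝ → ℝ → Prop) (K : ι → Set E) (A B : Set ι) (u : E) (α : ℝ) : Prop :=
  (∀ i ∈ A, ∀ y ∈ K i, r ⟪u, y⟫ α) ∧ ∀ i ∈ B, ∀ y ∈ K i, r α ⟪u, y⟫

theorem inner_mem_interior_of_mem_interior {u : E} (hu : u ≠ 0) {S : Set E} {t : Set ℝ}
    (hS : ∀ y ∈ S, ⟪u, y⟫ ∈ t) {c : E} (hc : c ∈ interior S) : ⟪u, c⟫ ∈ interior t := by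
  have hopen : IsOpenMap (innerSL ℝ u) := ContinuousLinearMap.isOpenMap_of_ne_zero _ <| by
    rwa [← norm_ne_zero_iff, innerSL_apply_norm, norm_ne_zero_iff]
  exact interior_mono (image_subset_iff.2 hS) (hopen.image_interior_subset S ⟨c, hc, rfl⟩)

theorem convex_setOf_fst_lt_snd : Convex ℝ {q : ℝ × ℝ | q.1 < q.2} := by
  have : {q : ℝ × ℝ | q.1 < q.2} = (LinearMap.fst ℝ ℝ ℝ - LinearMap.snd ℝ ℝ ℝ) ⁻¹' Iio 0 := by
    ext; simp [sub_neg]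
  exact this ▸ (convex_Iio 0).linear_preimage _

theorem convex_setOf_fst_le_snd : Convex ℝ {q : ℝ × ℝ | q.1 ≤ q.2} := by
  have : {q : ℝ × ℝ | q.1 ≤ q.2} = (LinearMap.fst ℝ ℝ ℝ - LinearMap.snd ℝ ℝ ℝ) ⁻¹' Iic 0 := by
    ext; simp
  exact this ▸ (convex_Iic 0).linear_preimage _

section Separates

variable {r : ℝ → ℝ → Prop} {K : ι → Set E} {A B : Set ι} {u : E} {α : ℝ}

theorem Separates.mono {A' B' : Set ι} (h : Separates r K A B u α) (hA : A' ⊆ A) (hB : B' ⊆ B) :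
    Separates r K A' B' u α :=
  ⟨fun i hi => h.1 i (hA hi), fun i hi => h.2 i (hB hi)⟩

theorem Separates.inter_singleton [DecidableEq ι] {I G : Finset ι}
    (h : Separates r K ↑(I ∩ G) ↑(G \ I) u α) {i : ι} (hi : i ∈ G) :
    Separates r K (↑I ∩ {i}) ({i} \ ↑I) u α :=
  h.mono (by rintro j ⟨hj, rfl⟩; exact Finset.mem_inter.2 ⟨hj, hi⟩)
    (by rintro j ⟨rfl, hj⟩; exact Finset.mem_sdiff.2 ⟨hi, hj⟩)

theorem separates_of_forall_inter_singleton (h : ∀ i, Separates r K (A ∩ {i}) ({i} \ A) u α) :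
    Separates r K A Aᶜ u α :=
  ⟨fun i hi => (h i).1 i ⟨hi, rfl⟩, fun i hi => (h i).2 i ⟨rfl, hi⟩⟩

theorem Separates.le_of_lt (h : Separates (· < ·) K A B u α) : Separates (· ≤ ·) K A B u α :=
  ⟨fun i hi y hy => (h.1 i hi y hy).le, fun i hi y hy => (h.2 i hi y hy).le⟩

theorem Separates.ne_zero (h : Separates (· < ·) K A B u α) {i j : ι} (hi : i ∈ A) (hj : j ∈ B)
    (hKi : (K i).Nonempty) (hKj : (K j).Nonempty) : u ≠ 0 := by
  rintro rfl
  obtain ⟨x, hx⟩ := hKi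
  obtain ⟨y, hy⟩ := hKj
  have hx' := h.1 i hi x hx
  have hy' := h.2 j hj y hy
  simp only [inner_zero_left] at hx' hy'
  linarith

theorem Separates.interior (h : Separates (· ≤ ·) K A B u α) (hu : u ≠ 0) :
    Separates (· < ·) (interior ∘ K) A B u α := by
  refine ⟨fun i hi y hy => ?_, fun i hi y hy => ?_⟩
  · simpa using inner_mem_interior_of_mem_interior hu (t := Iic α) (h.1 i hi) hy
  · simpa using inner_mem_interior_of_mem_interior hu (t := Ici α) (h.2 i hi) hy

theorem convex_setOf_separates (hr : Convex ℝ {q : ℝ × ℝ | r q.1 q.2}) (K : ι → Set E)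
    (A B : Set ι) : Convex ℝ {p : E × ℝ | Separates r K A B p.1 p.2} := by
  let L (y : E) : E × ℝ →ₗ[ℝ] ℝ × ℝ :=
    ((innerSL ℝ y).toLinearMap ∘ₗ LinearMap.fst ℝ E ℝ).prod (LinearMap.snd ℝ E ℝ)
  have hr_swap : Convex ℝ {q : ℝ × ℝ | r q.2 q.1} :=
    hr.linear_preimage (LinearEquiv.prodComm ℝ ℝ ℝ).toLinearMap
  have hL : {p : E × ℝ | Separates r K A B p.1 p.2} =
      (⋂ i ∈ A, ⋂ y ∈ K i, L y ⁻¹' {q | r q.1 q.2}) ∩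
        ⋂ i ∈ B, ⋂ y ∈ K i, L y ⁻¹' {q | r q.2 q.1} := by
    ext p
    simp [Separates, L, real_inner_comm]
  rw [hL]
  exact (convex_iInter₂ fun i _ => convex_iInter₂ fun y _ => hr.linear_preimage (L y)).inter
    (convex_iInter₂ fun i _ => convex_iInter₂ fun y _ => hr_swap.linear_preimage (L y))

end Separates

theorem exists_separates_lt_of_forall_mem_or_forall_not_mem [Finite ι] {K : ι → Set E}
    (hK : ∀ i, IsCompact (K i)) (u : E) {A : Set ι} (hA : (∀ i, i ∈ A) ∨ ∀ i, i ∉ A) :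
    ∃ α, Separates (· < ·) K A Aᶜ u α := by
  obtain ⟨C, hC⟩ := (isCompact_iUnion hK).exists_bound_of_continuousOn
    (f := fun y => ⟪u, y⟫) (by fun_prop)
  have hbound : ∀ i, ∀ y ∈ K i, |⟪u, y⟫| ≤ C := fun i y hy => hC y (mem_iUnion.2 ⟨i, hy⟩)
  rcases hA with hA | hA
  · exact ⟨C + 1, fun i _ y hy => by linarith [le_abs_self ⟪u, y⟫, hbound i y hy],
      fun i hi => (hi (hA i)).elim⟩
  · exact ⟨-(C + 1), fun i hi => (hA i hi).elim,
      fun i _ y hy => by linarith [neg_abs_le ⟪u, y⟫, hbound i y hy]⟩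

section Kirchberger

variable [FiniteDimensional ℝ E] [Fintype ι]

theorem exists_forall_mem_of_forall_card_le {F : ι → Set (E × ℝ)} (hF : ∀ i, Convex ℝ (F i))
    (h : ∀ G : Finset ι, G.card ≤ finrank ℝ E + 2 → ∃ p, ∀ i ∈ G, p ∈ F i) :
    ∃ p, ∀ i, p ∈ F i := by
  have hdim : finrank ℝ (E × ℝ) + 1 = finrank ℝ E + 2 := by
    rw [finrank_prod, finrank_self]
  obtain ⟨p, hp⟩ := Convex.helly_theorem' (s := Finset.univ) (fun i _ => hF i)
    fun G _ hG => by
      obtain ⟨p, hp⟩ := h G (hdim ▸ hG)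
      exact ⟨p, mem_iInter₂.2 hp⟩
  exact ⟨p, fun i => mem_iInter₂.1 hp i (Finset.mem_univ i)⟩

variable [DecidableEq ι] {K : ι → Set E}

theorem exists_separates_lt_of_forall_card_le (hK : ∀ i, IsCompact (K i))
    (hne : ∀ i, (K i).Nonempty) (I : Finset ι)
    (h : ∀ G : Finset ι, G.card ≤ finrank ℝ E + 2 →
      ∃ u α, u ≠ 0 ∧ Separates (· < ·) K ↑(I ∩ G) ↑(G \ I) u α) :
    ∃ u α, u ≠ 0 ∧ Separates (· < ·) K I (↑I)ᶜ u α := by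
  by_cases hI : (∀ i, i ∈ I) ∨ ∀ i, i ∉ I
  · obtain ⟨u, -, hu, -⟩ := h ∅ (by simp)
    obtain ⟨α, hα⟩ := exists_separates_lt_of_forall_mem_or_forall_not_mem hK u hI
    exact ⟨u, α, hu, hα⟩
  obtain ⟨⟨i, hi⟩, ⟨j, hj⟩⟩ : (∃ i, i ∈ I) ∧ ∃ j, j ∉ I := by
    simpa [not_or, not_forall, and_comm] using hI
  obtain ⟨⟨u, α⟩, hsep⟩ := exists_forall_mem_of_forall_card_le
    (F := fun i => {p : E × ℝ | Separates (· < ·) K (↑I ∩ {i}) ({i} \ ↑I) p.1 p.2})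
    (fun i => convex_setOf_separates convex_setOf_fst_lt_snd K _ _)
    fun G hG => by
      obtain ⟨u, α, -, hG⟩ := h G hG
      exact ⟨(u, α), fun i hi => hG.inter_singleton hi⟩
  have hsep := separates_of_forall_inter_singleton hsep
  exact ⟨u, α, hsep.ne_zero hi hj (hne i) (hne j), hsep⟩

theorem exists_separates_le_of_forall_card_le (hK : ∀ i, IsCompact (K i))
    (hint : ∀ i, (interior (K i)).Nonempty) (I : Finset ι)
    (h : ∀ G : Finset ι, G.card ≤ finrank ℝ E + 2 →
      ∃ u α, u ≠ 0 ∧ Separates (· ≤ ·) K ↑(I ∩ G) ↑(G \ I) u α) :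
    ∃ u α, u ≠ 0 ∧ Separates (· ≤ ·) K I (↑I)ᶜ u α := by
  by_cases hI : (∀ i, i ∈ I) ∨ ∀ i, i ∉ I
  · obtain ⟨u, -, hu, -⟩ := h ∅ (by simp)
    obtain ⟨α, hα⟩ := exists_separates_lt_of_forall_mem_or_forall_not_mem hK u hI
    exact ⟨u, α, hu, hα.le_of_lt⟩
  obtain ⟨⟨i, hi⟩, ⟨j, hj⟩⟩ : (∃ i, i ∈ I) ∧ ∃ j, j ∉ I := by
    simpa [not_or, not_forall, and_comm] using hI
  obtain ⟨⟨u, α⟩, hsep⟩ := exists_forall_mem_of_forall_card_le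
    (F := fun i => {p : E × ℝ | Separates (· ≤ ·) K (↑I ∩ {i}) ({i} \ ↑I) p.1 p.2} ∩
      {p | Separates (· < ·) (interior ∘ K) (↑I ∩ {i}) ({i} \ ↑I) p.1 p.2})
    (fun i => (convex_setOf_separates convex_setOf_fst_le_snd K _ _).inter
      (convex_setOf_separates convex_setOf_fst_lt_snd _ _ _))
    fun G hG => by
      obtain ⟨u, α, hu, hG⟩ := h G hG
      exact ⟨(u, α), fun i hi => ⟨hG.inter_singleton hi, (hG.interior hu).inter_singleton hi⟩⟩
  have hsep_interior := separates_of_forall_inter_singleton fun i => (hsep i).2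
  exact ⟨u, α, hsep_interior.ne_zero hi hj (hint i) (hint j),
    separates_of_forall_inter_singleton fun i => (hsep i).1⟩

end Kirchberger

theorem stmt_8_general (d n : ℕ) (K : Fin n → Set (EuclideanSpace ℝ (Fin d)))
    (hcpt : ∀ i, IsCompact (K i))
    (hint : ∀ i, (interior (K i)).Nonempty)
    (I : Finset (Fin n)) :
    ((∃ (u : EuclideanSpace ℝ (Fin d)) (α : ℝ), u ≠ 0 ∧
        (∀ i ∈ I, ∀ y ∈ K i, ⟪u, y⟫ < α) ∧ (∀ i ∉ I, ∀ y ∈ K i, α < ⟪u, y⟫)) ↔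
      (∀ G : Finset (Fin n), G.card ≤ d + 2 →
        ∃ (u : EuclideanSpace ℝ (Fin d)) (α : ℝ), u ≠ 0 ∧
          (∀ i ∈ I ∩ G, ∀ y ∈ K i, ⟪u, y⟫ < α) ∧
          (∀ i ∈ G \ I, ∀ y ∈ K i, α < ⟪u, y⟫))) ∧
    ((∃ (u : EuclideanSpace ℝ (Fin d)) (α : ℝ), u ≠ 0 ∧
        (∀ i ∈ I, ∀ y ∈ K i, ⟪u, y⟫ ≤ α) ∧ (∀ i ∉ I, ∀ y ∈ K i, α ≤ ⟪u, y⟫)) ↔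
      (∀ G : Finset (Fin n), G.card ≤ d + 2 →
        ∃ (u : EuclideanSpace ℝ (Fin d)) (α : ℝ), u ≠ 0 ∧
          (∀ i ∈ I ∩ G, ∀ y ∈ K i, ⟪u, y⟫ ≤ α) ∧
          (∀ i ∈ G \ I, ∀ y ∈ K i, α ≤ ⟪u, y⟫))) := by
  have hd : finrank ℝ (EuclideanSpace ℝ (Fin d)) + 2 = d + 2 := by
    rw [finrank_euclideanSpace_fin]
  have restrict {r : ℝ → ℝ → Prop} {u α} (h : Separates r K I (↑I)ᶜ u α) (G : Finset (Fin n)) :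
      Separates r K ↑(I ∩ G) ↑(G \ I) u α :=
    h.mono (Finset.coe_subset.2 Finset.inter_subset_left) fun i hi => (Finset.mem_sdiff.1 hi).2
  refine ⟨⟨fun ⟨u, α, hu, h⟩ G _ => ⟨u, α, hu, restrict h G⟩, fun h => ?_⟩,
    ⟨fun ⟨u, α, hu, h⟩ G _ => ⟨u, α, hu, restrict h G⟩, fun h => ?_⟩⟩
  · exact exists_separates_lt_of_forall_card_le hcpt (fun i => (hint i).mono interior_subset) I
      fun G hG => h G (hd ▸ hG)
  · exact exists_separates_le_of_forall_card_le hcpt hint I fun G hG => h G (hd ▸ hG)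

/-- **A Kirchberger-type theorem for families of convex bodies.**
Let `ℱ = {K₁, …, Kₙ}` be a family of convex bodies in `ℝ^d`, partitioned into
`ℱ₁` (indices in `I`) and `ℱ₂` (indices outside `I`). Then `⋃ℱ₁` can be strictly
separated from `⋃ℱ₂` by a hyperplane iff for every subfamily `𝒢` of cardinality
at most `d+2`, `⋃(ℱ₁ ∩ 𝒢)` can be strictly separated from `⋃(ℱ₂ ∩ 𝒢)` by a
hyperplane; and the same holds for non-strict separation. -/
theorem stmt_8 (d n : ℕ) (K : Fin n → Set (EuclideanSpace ℝ (Fin d)))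
    (hconv : ∀ i, Convex ℝ (K i)) (hcpt : ∀ i, IsCompact (K i))
    (hint : ∀ i, (interior (K i)).Nonempty)
    (I : Finset (Fin n)) :
    ((∃ (u : EuclideanSpace ℝ (Fin d)) (α : ℝ), u ≠ 0 ∧
        (∀ i ∈ I, ∀ y ∈ K i, ⟪u, y⟫ < α) ∧ (∀ i ∉ I, ∀ y ∈ K i, α < ⟪u, y⟫)) ↔
      (∀ G : Finset (Fin n), G.card ≤ d + 2 →
        ∃ (u : EuclideanSpace ℝ (Fin d)) (α : ℝ), u ≠ 0 ∧
          (∀ i ∈ I ∩ G, ∀ y ∈ K i, ⟪u, y⟫ < α) ∧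
          (∀ i ∈ G \ I, ∀ y ∈ K i, α < ⟪u, y⟫))) ∧
    ((∃ (u : EuclideanSpace ℝ (Fin d)) (α : ℝ), u ≠ 0 ∧
        (∀ i ∈ I, ∀ y ∈ K i, ⟪u, y⟫ ≤ α) ∧ (∀ i ∉ I, ∀ y ∈ K i, α ≤ ⟪u, y⟫)) ↔
      (∀ G : Finset (Fin n), G.card ≤ d + 2 →
        ∃ (u : EuclideanSpace ℝ (Fin d)) (α : ℝ), u ≠ 0 ∧
          (∀ i ∈ I ∩ G, ∀ y ∈ K i, ⟪u, y⟫ ≤ α) ∧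
          (∀ i ∈ G \ I, ∀ y ∈ K i, α ≤ ⟪u, y⟫))) :=
  stmt_8_general d n K hcpt hint I
end

section
/- Let ℱ = {K_1, …, K_n} be a family of convex bodies in ℝ^d. Then ℱ is non-separable if and only if for every partition of ℱ into two non-empty subfamilies ℱ₁ and ℱ₂, there exists a subfamily 𝒢 ⊆ ℱ of cardinality at most d+2 such that ⋃(ℱ₁ ∩ 𝒢) is not strictly separated from ⋃(ℱ₂ ∩ 𝒢) by any hyperplane. -/
/-!
Fix the partition `I`. For each body `Kᵢ`, the pairs `(u, α)` with `⟪u, ·⟫ < α` on `Kᵢ`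
(for `i ∈ I`), resp. `α < ⟪u, ·⟫` on `Kᵢ` (for `i ∉ I`), form a convex subset of
`ℝ^d × ℝ ≅ ℝ^(d+1)`, and a common point of all of them is exactly a hyperplane separating
the two subfamilies. Helly's theorem in dimension `d + 1` reduces the non-emptiness of this
intersection to subfamilies of at most `d + 2` bodies. The normal `u` of such a hyperplane
cannot vanish since the bodies on both sides are non-empty.
-/

open Set Metric
open scoped RealInnerProductSpace

section Separators

variable {ι E : Type*} [NormedAddCommGroup E] [InnerProductSpace ℝ E]

lemma convex_setOf_forall_inner_lt (S : Set E) :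
    Convex ℝ {p : E × ℝ | ∀ y ∈ S, ⟪p.1, y⟫ < p.2} := by
  have hS : {p : E × ℝ | ∀ y ∈ S, ⟪p.1, y⟫ < p.2} =
      ⋂ y ∈ S, {p | ((innerₛₗ ℝ y).comp (LinearMap.fst ℝ E ℝ) - LinearMap.snd ℝ E ℝ) p < 0} := by
    ext p
    simp [real_inner_comm]
  rw [hS]
  exact convex_iInter₂ fun y _ => convex_halfSpace_lt (LinearMap.isLinear _) 0

lemma convex_setOf_forall_lt_inner (S : Set E) :
    Convex ℝ {p : E × ℝ | ∀ y ∈ S, p.2 < ⟪p.1, y⟫} := by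
  have hS : {p : E × ℝ | ∀ y ∈ S, p.2 < ⟪p.1, y⟫} =
      ⋂ y ∈ S, {p | (LinearMap.snd ℝ E ℝ - (innerₛₗ ℝ y).comp (LinearMap.fst ℝ E ℝ)) p < 0} := by
    ext p
    simp [real_inner_comm]
  rw [hS]
  exact convex_iInter₂ fun y _ => convex_halfSpace_lt (LinearMap.isLinear _) 0

/-- The hyperplanes `⟪u, ·⟫ = α`, encoded as pairs `(u, α)`, that put `K i` on the side
prescribed by the partition `I`. -/
def separators (K : ι → Set E) (I : Set ι) (i : ι) : Set (E × ℝ) :=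
  open Classical in
  if i ∈ I then {p | ∀ y ∈ K i, ⟪p.1, y⟫ < p.2} else {p | ∀ y ∈ K i, p.2 < ⟪p.1, y⟫}

lemma convex_separators (K : ι → Set E) (I : Set ι) (i : ι) :
    Convex ℝ (separators K I i) := by
  unfold separators
  split_ifs
  · exact convex_setOf_forall_inner_lt _
  · exact convex_setOf_forall_lt_inner _

lemma mem_iInter₂_separators [DecidableEq ι] {K : ι → Set E} {I G : Finset ι} {u : E} {α : ℝ} :
    (u, α) ∈ ⋂ i ∈ G, separators K I i ↔
      (∀ i ∈ I ∩ G, ∀ y ∈ K i, ⟪u, y⟫ < α) ∧ (∀ i ∈ G \ I, ∀ y ∈ K i, α < ⟪u, y⟫) := by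
  simp only [mem_iInter₂, separators, Finset.mem_inter, Finset.mem_sdiff, Finset.mem_coe]
  constructor
  · intro h
    exact ⟨fun i hi => by simpa [hi.1] using h i hi.2, fun i hi => by simpa [hi.2] using h i hi.1⟩
  · intro h i hi
    by_cases hiI : i ∈ I
    · simpa [hiI] using h.1 i ⟨hiI, hi⟩
    · simpa [hiI] using h.2 i ⟨hi, hiI⟩

theorem exists_separator_of_forall_card_le [Fintype ι] [DecidableEq ι] [FiniteDimensional ℝ E]
    (K : ι → Set E) (I : Finset ι)
    (h : ∀ G : Finset ι, G.card ≤ Module.finrank ℝ E + 2 → ∃ (u : E) (α : ℝ),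
      (∀ i ∈ I ∩ G, ∀ y ∈ K i, ⟪u, y⟫ < α) ∧ (∀ i ∈ G \ I, ∀ y ∈ K i, α < ⟪u, y⟫)) :
    ∃ (u : E) (α : ℝ), (∀ i ∈ I, ∀ y ∈ K i, ⟪u, y⟫ < α) ∧ (∀ i ∉ I, ∀ y ∈ K i, α < ⟪u, y⟫) := by
  obtain ⟨⟨u, α⟩, hp⟩ : (⋂ i ∈ (Finset.univ : Finset ι), separators K I i).Nonempty := by
    refine Convex.helly_theorem' (fun i _ => convex_separators K I i) fun G _ hG => ?_
    rw [Module.finrank_prod, Module.finrank_self] at hG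
    obtain ⟨u, α, hu⟩ := h G hG
    exact ⟨(u, α), mem_iInter₂_separators.mpr hu⟩
  obtain ⟨hI, hIc⟩ := mem_iInter₂_separators.mp hp
  exact ⟨u, α, fun i hi => hI i (by simpa using hi), fun i hi => hIc i (by simpa using hi)⟩

lemma ne_zero_of_inner_lt_of_lt_inner {u x y : E} {α : ℝ} (hx : ⟪u, x⟫ < α)
    (hy : α < ⟪u, y⟫) : u ≠ 0 := by
  rintro rfl
  simp only [inner_zero_left] at hx hy
  linarith

end Separators

theorem stmt_9_general (d n : ℕ) (K : Fin n → Set (EuclideanSpace ℝ (Fin d)))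
    (hint : ∀ i, (interior (K i)).Nonempty) :
    NonSeparableFamily K ↔
      ∀ I : Finset (Fin n), I.Nonempty → I ≠ Finset.univ →
        ∃ G : Finset (Fin n), G.card ≤ d + 2 ∧
          ¬ (∃ (u : EuclideanSpace ℝ (Fin d)) (α : ℝ), u ≠ 0 ∧
            (∀ i ∈ I ∩ G, ∀ y ∈ K i, ⟪u, y⟫ < α) ∧
            (∀ i ∈ G \ I, ∀ y ∈ K i, α < ⟪u, y⟫)) := by
  constructor
  · intro hNS I ⟨i, hi⟩ hI
    by_contra! hsep
    obtain ⟨j, hj⟩ : ∃ j, j ∉ I := by simpa [Finset.eq_univ_iff_forall] using hI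
    obtain ⟨u, α, hbelow, habove⟩ := exists_separator_of_forall_card_le K I fun G hG => by
      obtain ⟨u, α, -, hu⟩ := hsep G (by simpa using hG)
      exact ⟨u, α, hu⟩
    obtain ⟨x, hx⟩ := (hint i).mono interior_subset
    obtain ⟨y, hy⟩ := (hint j).mono interior_subset
    have hu : u ≠ 0 := ne_zero_of_inner_lt_of_lt_inner (hbelow i hi x hx) (habove j hj y hy)
    exact hNS ⟨I, u, α, ⟨i, hi⟩, hI, hu, hbelow, habove⟩
  · rintro h ⟨I, u, α, hIne, hI, hu, hbelow, habove⟩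
    obtain ⟨G, -, hG⟩ := h I hIne hI
    exact hG ⟨u, α, hu, fun i hi => hbelow i (Finset.mem_inter.mp hi).1,
      fun i hi => habove i (Finset.mem_sdiff.mp hi).2⟩

/-- A family `ℱ = {K₁, …, Kₙ}` of convex bodies in `ℝ^d` is non-separable iff for
every partition of `ℱ` into non-empty subfamilies `ℱ₁` (indices in `I`) and `ℱ₂`
(the rest), there is a subfamily `𝒢` of cardinality at most `d+2` such that
`⋃(ℱ₁ ∩ 𝒢)` is not strictly separated from `⋃(ℱ₂ ∩ 𝒢)` by any hyperplane. -/
theorem stmt_9 (d n : ℕ) (K : Fin n → Set (EuclideanSpace ℝ (Fin d)))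
    (hconv : ∀ i, Convex ℝ (K i)) (hcpt : ∀ i, IsCompact (K i))
    (hint : ∀ i, (interior (K i)).Nonempty) :
    NonSeparableFamily K ↔
      ∀ I : Finset (Fin n), I.Nonempty → I ≠ Finset.univ →
        ∃ G : Finset (Fin n), G.card ≤ d + 2 ∧
          ¬ (∃ (u : EuclideanSpace ℝ (Fin d)) (α : ℝ), u ≠ 0 ∧
            (∀ i ∈ I ∩ G, ∀ y ∈ K i, ⟪u, y⟫ < α) ∧
            (∀ i ∈ G \ I, ∀ y ∈ K i, α < ⟪u, y⟫)) :=
  stmt_9_general d n K hint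
end
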